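/- arXiv:1603.08213 — 4 statements merged into one kernel-verified Lean document; each statement's English description precedes it below -/
import Mathlib

section
/- A CNOT gate G₂ whose active wire is not a wire of gate G₁, and whose control wires do not include the active wire of G₁, commutes with G₁: executing G₁;G₂ equals executing G₂;G₁ on every valuation. -/
set_option autoImplicit true
set_option maxHeartbeats 1000000

/-- A multi-controlled-not gate: an active wire and a list of controls
(wire, polarity). -/
structure Gate where
  active : ℕ
  controls : List (ℕ × Bool)

/-- Well-formedness: no control wire coincides with the active wire. -/
def Gate.wf (g : Gate) : Prop := ∀ c ∈ g.controls, c.1 ≠ g.active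

/-- The set of wires of a gate. -/
def Gate.wires (g : Gate) : Set ℕ := insert g.active {w | ∃ b, (w, b) ∈ g.controls}

/-- Value of a control `(j, b)` on a valuation `v` : `v j XOR b XOR true`. -/
def ctrlVal (v : ℕ → Bool) (c : ℕ × Bool) : Bool := Bool.xor (v c.1) (Bool.xor c.2 true)

/-- Execution of a gate on a valuation. -/
def execGate (g : Gate) (v : ℕ → Bool) : ℕ → Bool := fun l =>
  if l = g.active then
    if g.controls.isEmpty then !(v l)
    else Bool.xor (v l) (g.controls.all (ctrlVal v))
  else v l

/-- Execution of a list of gates, in order. -/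
def execCircuit (C : List Gate) (v : ℕ → Bool) : ℕ → Bool :=
  C.foldl (fun v g => execGate g v) v

/-- Wires of a circuit. -/
def circuitWires (C : List Gate) : Set ℕ := {w | ∃ g ∈ C, w ∈ g.wires}

/-! A gate is the update of its active wire by a value read off its active and control wires.
Hence it commutes with writing to any wire it does not touch, and the two updates of the
theorem, at distinct wires, commute. -/

open Function

namespace Gate

theorem active_mem_wires (g : Gate) : g.active ∈ g.wires :=
  Set.mem_insert _ _

theorem ne_active_of_notMem_wires {g : Gate} {a : ℕ} (ha : a ∉ g.wires) : a ≠ g.active :=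
  fun h => ha (h ▸ g.active_mem_wires)

theorem notMem_controls_of_notMem_wires {g : Gate} {a : ℕ} (ha : a ∉ g.wires) (b : Bool) :
    (a, b) ∉ g.controls :=
  fun h => ha (Set.mem_insert_of_mem _ ⟨b, h⟩)

theorem notMem_wires_of_ne_active {g : Gate} {a : ℕ} (hne : a ≠ g.active)
    (hctrl : ∀ b : Bool, (a, b) ∉ g.controls) : a ∉ g.wires := by
  rintro (h | ⟨b, hb⟩)
  exacts [hne h, hctrl b hb]

end Gate

/-- The controlless branch of `execGate` is subsumed: the empty conjunction is `true`. -/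
theorem execGate_eq_update (g : Gate) (v : ℕ → Bool) :
    execGate g v = update v g.active (xor (v g.active) (g.controls.all (ctrlVal v))) := by
  funext l
  by_cases hl : l = g.active
  · subst hl
    rcases g with ⟨a, _ | ⟨c, cs⟩⟩ <;> simp [execGate]
  · simp [execGate, hl]

theorem all_ctrlVal_update {a : ℕ} {cs : List (ℕ × Bool)} (ha : ∀ b : Bool, (a, b) ∉ cs)
    (v : ℕ → Bool) (x : Bool) :
    cs.all (ctrlVal (update v a x)) = cs.all (ctrlVal v) := by
  rw [Bool.eq_iff_iff, List.all_eq_true, List.all_eq_true]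
  refine forall₂_congr fun c hc => ?_
  have hca : c.1 ≠ a := fun h => ha c.2 (h ▸ hc)
  simp only [ctrlVal, update_of_ne hca]

theorem execGate_update {g : Gate} {a : ℕ} (ha : a ∉ g.wires) (v : ℕ → Bool) (x : Bool) :
    execGate g (update v a x) = update (execGate g v) a x := by
  have hne := Gate.ne_active_of_notMem_wires ha
  rw [execGate_eq_update, execGate_eq_update, update_of_ne hne.symm,
    all_ctrlVal_update (Gate.notMem_controls_of_notMem_wires ha), update_comm hne.symm]

/-- a gate G₂ whose active wire is not a wire of G₁ and whose
control wires do not include the active wire of G₁ commutes with G₁. -/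
theorem gates_semi_disjoint_comm (g₁ g₂ : Gate)
    (h1 : g₂.active ∉ g₁.wires)
    (h2 : ∀ b : Bool, (g₁.active, b) ∉ g₂.controls)
    (v : ℕ → Bool) :
    execGate g₂ (execGate g₁ v) = execGate g₁ (execGate g₂ v) := by
  have hne : g₂.active ≠ g₁.active := Gate.ne_active_of_notMem_wires h1
  have hg₁ : g₁.active ∉ g₂.wires := Gate.notMem_wires_of_ne_active hne.symm h2
  conv_lhs => rw [execGate_eq_update g₁, execGate_update hg₁]
  conv_rhs => rw [execGate_eq_update g₂, execGate_update h1]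
  rw [execGate_eq_update g₁, execGate_eq_update g₂, update_comm hne]
end

section
/- Type preservation for the circuit-generating abstract machine: if p₁:bit, ..., p_{#L}:bit ⊢ M : bit^m holds, (M, RC, L) is an abstract machine state, and (M, RC, L) →_am (N, RC', L'), then p₁:bit, ..., p_{#L'}:bit ⊢ N : bit^m. -/
set_option autoImplicit true
set_option maxHeartbeats 1000000


/-! ## The language PCF^list -/

/-- Types of PCF^list. -/
inductive Ty : Type
  | bit : Ty
  | unit : Ty
  | arrow : Ty → Ty → Ty
  | prod : Ty → Ty → Ty
  | sum : Ty → Ty → Ty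
  | list : Ty → Ty

/-- Terms of PCF^list, with de Bruijn indices. -/
inductive Tm : Type
  | var : ℕ → Tm
  | lam : Tm → Tm
  | app : Tm → Tm → Tm
  | pair : Tm → Tm → Tm
  | fst : Tm → Tm
  | snd : Tm → Tm
  | skip : Tm
  | letUnit : Tm → Tm → Tm           -- let skip = M in N
  | tt : Tm
  | ff : Tm
  | ite : Tm → Tm → Tm → Tm
  | notOp : Tm
  | andOp : Tm
  | xorOp : Tm
  | inl : Tm → Tm
  | inr : Tm → Tm
  | matchSum : Tm → Tm → Tm → Tm     -- match P with inl x ↦ M | inr y ↦ N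
  | split : Tm
  | fix : Tm → Tm                    -- the fixpoint operator Y
  | err : Tm

/-- Boolean constants as terms. -/
def ofBool : Bool → Tm
  | true => .tt
  | false => .ff

/-- Shift the free variables `≥ c` of a term by `k`. -/
def liftTm (k : ℕ) : ℕ → Tm → Tm
  | c, .var n => if n < c then .var n else .var (n + k)
  | c, .lam M => .lam (liftTm k (c+1) M)
  | c, .app M N => .app (liftTm k c M) (liftTm k c N)
  | c, .pair M N => .pair (liftTm k c M) (liftTm k c N)
  | c, .fst M => .fst (liftTm k c M)
  | c, .snd M => .snd (liftTm k c M)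
  | c, .letUnit M N => .letUnit (liftTm k c M) (liftTm k c N)
  | c, .ite P M N => .ite (liftTm k c P) (liftTm k c M) (liftTm k c N)
  | c, .inl M => .inl (liftTm k c M)
  | c, .inr M => .inr (liftTm k c M)
  | c, .matchSum P M N =>
      .matchSum (liftTm k c P) (liftTm k (c+1) M) (liftTm k (c+1) N)
  | c, .fix M => .fix (liftTm k c M)
  | _, t => t

/-- Capture-avoiding substitution of `N` for the variable `j`. -/
def subst (N : Tm) : ℕ → Tm → Tm
  | j, .var n => if n = j then liftTm j 0 N
                 else if j < n then .var (n - 1) else .var n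
  | j, .lam M => .lam (subst N (j+1) M)
  | j, .app M P => .app (subst N j M) (subst N j P)
  | j, .pair M P => .pair (subst N j M) (subst N j P)
  | j, .fst M => .fst (subst N j M)
  | j, .snd M => .snd (subst N j M)
  | j, .letUnit M P => .letUnit (subst N j M) (subst N j P)
  | j, .ite P M Q => .ite (subst N j P) (subst N j M) (subst N j Q)
  | j, .inl M => .inl (subst N j M)
  | j, .inr M => .inr (subst N j M)
  | j, .matchSum P M Q =>
      .matchSum (subst N j P) (subst N (j+1) M) (subst N (j+1) Q)
  | j, .fix M => .fix (subst N j M)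
  | _, t => t

/-- First-order types. -/
inductive FirstOrder : Ty → Prop
  | bit : FirstOrder .bit
  | prod {A B} : FirstOrder A → FirstOrder B → FirstOrder (.prod A B)
  | list {A} : FirstOrder A → FirstOrder (.list A)

/-- Type equality generated by the coercion between `[A]` and
`1 ⊕ (A × [A])`. -/
inductive TyEq : Ty → Ty → Prop
  | refl (A) : TyEq A A
  | symm {A B} : TyEq A B → TyEq B A
  | trans {A B C} : TyEq A B → TyEq B C → TyEq A C
  | fold (A) : TyEq (.sum .unit (.prod A (.list A))) (.list A)
  | arrow {A A' B B'} : TyEq A A' → TyEq B B' → TyEq (.arrow A B) (.arrow A' B')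
  | prod {A A' B B'} : TyEq A A' → TyEq B B' → TyEq (.prod A B) (.prod A' B')
  | sum {A A' B B'} : TyEq A A' → TyEq B B' → TyEq (.sum A B) (.sum A' B')
  | list {A A'} : TyEq A A' → TyEq (.list A) (.list A')

/-- Typing judgment of PCF^list (contexts are lists of types, de Bruijn). -/
inductive HasType : List Ty → Tm → Ty → Prop
  | var {Δ n A} : Δ[n]? = some A → HasType Δ (.var n) A
  | lam {Δ A B M} : HasType (A :: Δ) M B → HasType Δ (.lam M) (.arrow A B)
  | app {Δ M N A B} : HasType Δ M (.arrow A B) → HasType Δ N A →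
      HasType Δ (.app M N) B
  | pair {Δ M N A B} : HasType Δ M A → HasType Δ N B →
      HasType Δ (.pair M N) (.prod A B)
  | fst {Δ M A B} : HasType Δ M (.prod A B) → HasType Δ (.fst M) A
  | snd {Δ M A B} : HasType Δ M (.prod A B) → HasType Δ (.snd M) B
  | skip {Δ} : HasType Δ .skip .unit
  | letUnit {Δ M N B} : HasType Δ M .unit → HasType Δ N B →
      HasType Δ (.letUnit M N) B
  | tt {Δ} : HasType Δ .tt .bit
  | ff {Δ} : HasType Δ .ff .bit
  | ite {Δ P M N C} : HasType Δ P .bit → HasType Δ M C → HasType Δ N C →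
      FirstOrder C → HasType Δ (.ite P M N) C
  | notOp {Δ} : HasType Δ .notOp (.arrow .bit .bit)
  | andOp {Δ} : HasType Δ .andOp (.arrow (.prod .bit .bit) .bit)
  | xorOp {Δ} : HasType Δ .xorOp (.arrow (.prod .bit .bit) .bit)
  | inl {Δ M A B} : HasType Δ M A → HasType Δ (.inl M) (.sum A B)
  | inr {Δ M A B} : HasType Δ M B → HasType Δ (.inr M) (.sum A B)
  | matchSum {Δ P M N A B C} : HasType Δ P (.sum A B) →
      HasType (A :: Δ) M C → HasType (B :: Δ) N C →
      HasType Δ (.matchSum P M N) C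
  | split {Δ A} :
      HasType Δ .split (.arrow (.list A) (.sum .unit (.prod A (.list A))))
  | fix {Δ M A} : HasType Δ M (.arrow A A) → HasType Δ (.fix M) A
  | err {Δ A} : HasType Δ .err A
  | conv {Δ M A B} : HasType Δ M A → TyEq A B → HasType Δ M B

/-- Values. -/
inductive Value : Tm → Prop
  | lam (M) : Value (.lam M)
  | pair {M N} : Value M → Value N → Value (.pair M N)
  | inl {M} : Value M → Value (.inl M)
  | inr {M} : Value M → Value (.inr M)
  | skip : Value .skip
  | tt : Value .tt
  | ff : Value .ff
  | notOp : Value .notOp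
  | andOp : Value .andOp
  | xorOp : Value .xorOp
  | split : Value .split

/-- The predicate "contains the error term Err as a subterm". -/
inductive ContainsErr : Tm → Prop
  | err : ContainsErr .err
  | lam {M} : ContainsErr M → ContainsErr (.lam M)
  | appL {M N} : ContainsErr M → ContainsErr (.app M N)
  | appR {M N} : ContainsErr N → ContainsErr (.app M N)
  | pairL {M N} : ContainsErr M → ContainsErr (.pair M N)
  | pairR {M N} : ContainsErr N → ContainsErr (.pair M N)
  | fst {M} : ContainsErr M → ContainsErr (.fst M)
  | snd {M} : ContainsErr M → ContainsErr (.snd M)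
  | letL {M N} : ContainsErr M → ContainsErr (.letUnit M N)
  | letR {M N} : ContainsErr N → ContainsErr (.letUnit M N)
  | ite1 {P M N} : ContainsErr P → ContainsErr (.ite P M N)
  | ite2 {P M N} : ContainsErr M → ContainsErr (.ite P M N)
  | ite3 {P M N} : ContainsErr N → ContainsErr (.ite P M N)
  | inl {M} : ContainsErr M → ContainsErr (.inl M)
  | inr {M} : ContainsErr M → ContainsErr (.inr M)
  | match1 {P M N} : ContainsErr P → ContainsErr (.matchSum P M N)
  | match2 {P M N} : ContainsErr M → ContainsErr (.matchSum P M N)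
  | match3 {P M N} : ContainsErr N → ContainsErr (.matchSum P M N)
  | fix {M} : ContainsErr M → ContainsErr (.fix M)

/-- Small-step reduction of PCF^list, closed under reduction of subterms. -/
inductive Step : Tm → Tm → Prop
  | beta (M N) : Step (.app (.lam M) N) (subst N 0 M)
  | fstPair (M N) : Step (.fst (.pair M N)) M
  | sndPair (M N) : Step (.snd (.pair M N)) N
  | letU (M) : Step (.letUnit .skip M) M
  | iteTt (M N) : Step (.ite .tt M N) M
  | iteFf (M N) : Step (.ite .ff M N) N
  | splitRed (M) : Step (.app .split M) M
  | matchInl (P M N) : Step (.matchSum (.inl P) M N) (subst P 0 M)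
  | matchInr (P M N) : Step (.matchSum (.inr P) M N) (subst P 0 N)
  | fixRed (M) : Step (.fix M) (.app M (.fix M))
  | notRed (b) : Step (.app .notOp (ofBool b)) (ofBool (!b))
  | andRed (a b) : Step (.app .andOp (.pair (ofBool a) (ofBool b))) (ofBool (a && b))
  | xorRed (a b) : Step (.app .xorOp (.pair (ofBool a) (ofBool b)))
      (ofBool (Bool.xor a b))
  | lamC {M M'} : Step M M' → Step (.lam M) (.lam M')
  | appL {M M' N} : Step M M' → Step (.app M N) (.app M' N)
  | appR {M N N'} : Step N N' → Step (.app M N) (.app M N')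
  | pairL {M M' N} : Step M M' → Step (.pair M N) (.pair M' N)
  | pairR {M N N'} : Step N N' → Step (.pair M N) (.pair M N')
  | fstC {M M'} : Step M M' → Step (.fst M) (.fst M')
  | sndC {M M'} : Step M M' → Step (.snd M) (.snd M')
  | letL {M M' N} : Step M M' → Step (.letUnit M N) (.letUnit M' N)
  | letR {M N N'} : Step N N' → Step (.letUnit M N) (.letUnit M N')
  | ite1 {P P' M N} : Step P P' → Step (.ite P M N) (.ite P' M N)
  | ite2 {P M M' N} : Step M M' → Step (.ite P M N) (.ite P M' N)
  | ite3 {P M N N'} : Step N N' → Step (.ite P M N) (.ite P M N')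
  | inlC {M M'} : Step M M' → Step (.inl M) (.inl M')
  | inrC {M M'} : Step M M' → Step (.inr M) (.inr M')
  | match1 {P P' M N} : Step P P' → Step (.matchSum P M N) (.matchSum P' M N)
  | match2 {P M M' N} : Step M M' → Step (.matchSum P M N) (.matchSum P M' N)
  | match3 {P M N N'} : Step N N' → Step (.matchSum P M N) (.matchSum P M N')
  | fixC {M M'} : Step M M' → Step (.fix M) (.fix M')

/-- The type `bit^m` (right-nested products of `bit`). -/
def bitPow : ℕ → Ty
  | 0 => .unit
  | 1 => .bit
  | n + 2 => .prod .bit (bitPow (n + 1))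

/-! ## The circuit-generating abstract machine

The state of the machine is a term `M` (whose free variables, the linked
variables `p₀, p₁, …`, appear at depth `d` as de Bruijn indices `d + j`),
a raw circuit `C` (a list of gates, most recent first, so that the circuit
is executed in reverse list order), an input wire set `I`, and a linking
function `L : List ℕ` mapping the machine variable `j` to the wire `L[j]`. -/

/-- Execution of a machine circuit: the gates of `C` are executed in
reverse list order (gates are prepended as they are generated). -/
def runCircuit (C : List Gate) (v : ℕ → Bool) : ℕ → Bool :=
  C.foldr execGate v

/-- A wire is fresh for the machine state when it is neither an input wire,
nor a wire of the circuit, nor in the range of the linking function. -/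
def FreshWire (I : Finset ℕ) (C : List Gate) (L : List ℕ) (w : ℕ) : Prop :=
  w ∉ I ∧ w ∉ circuitWires C ∧ w ∉ L

/-- First-order extensions of the linking function `L`, at depth `d`:
linked variables, products of extensions, and lists of extensions. -/
inductive FOExt (d : ℕ) (L : List ℕ) : Tm → Prop
  | var {j} : j < L.length → FOExt d L (.var (d + j))
  | pair {M N} : FOExt d L M → FOExt d L N → FOExt d L (.pair M N)
  | nil : FOExt d L (.inl .skip)
  | cons {M N} : FOExt d L M → FOExt d L N → FOExt d L (.inr (.pair M N))

/-- `IteAux d L n V W U n' ps` : the branches `V` and `W` are first-order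
extensions of `L` with the same shape; `U` is the first-order extension of
the same shape whose variables are the fresh machine variables
`n, n+1, …, n'-1` (pairwise distinct, occurring at depth `d`), and `ps`
collects, in order, the pairs of wires of the corresponding variables of
`V` and `W`. -/
inductive IteAux (d : ℕ) (L : List ℕ) : ℕ → Tm → Tm → Tm → ℕ → List (ℕ × ℕ) → Prop
  | var {n j k} (hj : j < L.length) (hk : k < L.length) :
      IteAux d L n (.var (d + j)) (.var (d + k)) (.var (d + n)) (n + 1)
        [(L.getD j 0, L.getD k 0)]
  | pair {n V₁ W₁ U₁ n₁ p₁ V₂ W₂ U₂ n₂ p₂} :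
      IteAux d L n V₁ W₁ U₁ n₁ p₁ → IteAux d L n₁ V₂ W₂ U₂ n₂ p₂ →
      IteAux d L n (.pair V₁ V₂) (.pair W₁ W₂) (.pair U₁ U₂) n₂ (p₁ ++ p₂)
  | nil {n} : IteAux d L n (.inl .skip) (.inl .skip) (.inl .skip) n []
  | cons {n V₁ W₁ U₁ n₁ p₁ V₂ W₂ U₂ n₂ p₂} :
      IteAux d L n V₁ W₁ U₁ n₁ p₁ → IteAux d L n₁ V₂ W₂ U₂ n₂ p₂ →
      IteAux d L n (.inr (.pair V₁ V₂)) (.inr (.pair W₁ W₂))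
        (.inr (.pair U₁ U₂)) n₂ (p₁ ++ p₂)

/-- The gates generated by an if-then-else on the wire `pw`: for each fresh
wire `u` and corresponding pair `(a, b)` of wires of the two branches, the
gates CNOT(u; (pw,true),(a,true)) and CNOT(u; (pw,false),(b,true)),
in generation order. -/
def iteGates (pw : ℕ) : List ℕ → List (ℕ × ℕ) → List Gate
  | u :: us, (a, b) :: ps =>
      ⟨u, [(pw, true), (a, true)]⟩ :: ⟨u, [(pw, false), (b, true)]⟩ ::
        iteGates pw us ps
  | _, _ => []

/-- The rewrite relation `→_am` on circuit-generating abstract machines.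
`AMStep I d M C L N C' L'` : at binder depth `d`, the machine
`(M, (I, C), L)` rewrites to `(N, (I, C'), L')`.  The generic rules leave
the circuit untouched; the rules for booleans record gates in the circuit
and allocate fresh wires; the relation is closed under arbitrary
beta-contexts. -/
inductive AMStep (I : Finset ℕ) : ℕ → Tm → List Gate → List ℕ →
    Tm → List Gate → List ℕ → Prop
  /- generic rules -/
  | beta (d M N C L) : AMStep I d (.app (.lam M) N) C L (subst N 0 M) C L
  | fstPair (d M N C L) : AMStep I d (.fst (.pair M N)) C L M C L
  | sndPair (d M N C L) : AMStep I d (.snd (.pair M N)) C L N C L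
  | letU (d M C L) : AMStep I d (.letUnit .skip M) C L M C L
  | splitRed (d M C L) : AMStep I d (.app .split M) C L M C L
  | matchInl (d P M N C L) :
      AMStep I d (.matchSum (.inl P) M N) C L (subst P 0 M) C L
  | matchInr (d P M N C L) :
      AMStep I d (.matchSum (.inr P) M N) C L (subst P 0 N) C L
  | fixRed (d M C L) : AMStep I d (.fix M) C L (.app M (.fix M)) C L
  /- rules for booleans -/
  | ffRed (d C L w) (hw : FreshWire I C L w) :
      AMStep I d .ff C L (.var (d + L.length)) C (L ++ [w])
  | ttRed (d C L w) (hw : FreshWire I C L w) :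
      AMStep I d .tt C L (.var (d + L.length)) (⟨w, []⟩ :: C) (L ++ [w])
  | notRed (d C L j w) (hj : j < L.length) (hw : FreshWire I C L w) :
      AMStep I d (.app .notOp (.var (d + j))) C L (.var (d + L.length))
        (⟨w, [(L.getD j 0, false)]⟩ :: C) (L ++ [w])
  | andRed (d C L j k w) (hj : j < L.length) (hk : k < L.length)
      (hw : FreshWire I C L w) :
      AMStep I d (.app .andOp (.pair (.var (d + j)) (.var (d + k)))) C L
        (.var (d + L.length))
        (⟨w, [(L.getD j 0, true), (L.getD k 0, true)]⟩ :: C) (L ++ [w])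
  | xorRed (d C L j k w) (hj : j < L.length) (hk : k < L.length)
      (hw : FreshWire I C L w) :
      AMStep I d (.app .xorOp (.pair (.var (d + j)) (.var (d + k)))) C L
        (.var (d + L.length))
        (⟨w, [(L.getD j 0, true)]⟩ :: ⟨w, [(L.getD k 0, true)]⟩ :: C)
        (L ++ [w])
  | iteRed (d C L j V W U n ps ws) (hj : j < L.length)
      (ha : IteAux d L L.length V W U n ps)
      (hlen : ws.length = ps.length) (hnd : ws.Nodup)
      (hfr : ∀ w ∈ ws, FreshWire I C L w) :
      AMStep I d (.ite (.var (d + j)) V W) C L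
        U ((iteGates (L.getD j 0) ws ps).reverse ++ C) (L ++ ws)
  | iteErr (d C L j V W) (hj : j < L.length)
      (hV : FOExt d L V) (hW : FOExt d L W)
      (hns : ¬ ∃ U n ps, IteAux d L L.length V W U n ps) :
      AMStep I d (.ite (.var (d + j)) V W) C L .err C L
  /- closure under beta-contexts -/
  | lamC {d M C L M' C' L'} : AMStep I (d+1) M C L M' C' L' →
      AMStep I d (.lam M) C L (.lam M') C' L'
  | appL {d M C L M' C' L'} (N) : AMStep I d M C L M' C' L' →
      AMStep I d (.app M N) C L (.app M' N) C' L'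
  | appR {d N C L N' C' L'} (M) : AMStep I d N C L N' C' L' →
      AMStep I d (.app M N) C L (.app M N') C' L'
  | pairL {d M C L M' C' L'} (N) : AMStep I d M C L M' C' L' →
      AMStep I d (.pair M N) C L (.pair M' N) C' L'
  | pairR {d N C L N' C' L'} (M) : AMStep I d N C L N' C' L' →
      AMStep I d (.pair M N) C L (.pair M N') C' L'
  | fstC {d M C L M' C' L'} : AMStep I d M C L M' C' L' →
      AMStep I d (.fst M) C L (.fst M') C' L'
  | sndC {d M C L M' C' L'} : AMStep I d M C L M' C' L' →
      AMStep I d (.snd M) C L (.snd M') C' L'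
  | letL {d M C L M' C' L'} (N) : AMStep I d M C L M' C' L' →
      AMStep I d (.letUnit M N) C L (.letUnit M' N) C' L'
  | letR {d N C L N' C' L'} (M) : AMStep I d N C L N' C' L' →
      AMStep I d (.letUnit M N) C L (.letUnit M N') C' L'
  | ite1 {d P C L P' C' L'} (M N) : AMStep I d P C L P' C' L' →
      AMStep I d (.ite P M N) C L (.ite P' M N) C' L'
  | ite2 {d M C L M' C' L'} (P N) : AMStep I d M C L M' C' L' →
      AMStep I d (.ite P M N) C L (.ite P M' N) C' L'
  | ite3 {d N C L N' C' L'} (P M) : AMStep I d N C L N' C' L' →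
      AMStep I d (.ite P M N) C L (.ite P M N') C' L'
  | inlC {d M C L M' C' L'} : AMStep I d M C L M' C' L' →
      AMStep I d (.inl M) C L (.inl M') C' L'
  | inrC {d M C L M' C' L'} : AMStep I d M C L M' C' L' →
      AMStep I d (.inr M) C L (.inr M') C' L'
  | match1 {d P C L P' C' L'} (M N) : AMStep I d P C L P' C' L' →
      AMStep I d (.matchSum P M N) C L (.matchSum P' M N) C' L'
  | match2 {d M C L M' C' L'} (P N) : AMStep I (d+1) M C L M' C' L' →
      AMStep I d (.matchSum P M N) C L (.matchSum P M' N) C' L'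
  | match3 {d N C L N' C' L'} (P M) : AMStep I (d+1) N C L N' C' L' →
      AMStep I d (.matchSum P M N) C L (.matchSum P M N') C' L'
  | fixC {d M C L M' C' L'} : AMStep I d M C L M' C' L' →
      AMStep I d (.fix M) C L (.fix M') C' L'

/-- `→_am` on machine states (term, circuit, linking function), at top
level (depth 0). -/
def AMStepT (I : Finset ℕ) (s t : Tm × List Gate × List ℕ) : Prop :=
  AMStep I 0 s.1 s.2.1 s.2.2 t.1 t.2.1 t.2.2

/-!
Preservation is proved by induction on the step, for a term typed in a context `Γ ++ bit^#L`,
where `Γ` types the `d` binders crossed by the congruence rules. The generic redexes are typed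
by the usual generation and substitution lemmas, using that the type equality `TyEq` is
injective on type formers. A bit rule replaces a term of type `bit` by the fresh linked variable
`p_{#L}`, of type `bit` in the extended context; an if-then-else on a wire replaces its first-order
branch by a term of the same shape over fresh linked variables, which has the branch's type.
The linking function only grows, so the subterms left untouched stay typed by weakening.
-/

/-- The two arguments of a binary type former, reading `[A]` as `1 ⊕ (A × [A])` so that both
projections respect `TyEq`. -/
def Ty.leftArg : Ty → Ty
  | .arrow A _ | .prod A _ | .sum A _ => A
  | .list _ => .unit
  | T => T

def Ty.rightArg : Ty → Ty
  | .arrow _ B | .prod _ B | .sum _ B => B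
  | .list A => .prod A (.list A)
  | T => T

namespace TyEq

theorem leftArg {S T : Ty} (h : TyEq S T) : TyEq S.leftArg T.leftArg := by
  induction h with
  | refl => exact .refl _
  | symm _ ih => exact ih.symm
  | trans _ _ ih₁ ih₂ => exact ih₁.trans ih₂
  | fold | list => exact .refl _
  | arrow h _ | prod h _ | sum h _ => exact h

theorem rightArg {S T : Ty} (h : TyEq S T) : TyEq S.rightArg T.rightArg := by
  induction h with
  | refl => exact .refl _
  | symm _ ih => exact ih.symm
  | trans _ _ ih₁ ih₂ => exact ih₁.trans ih₂
  | fold => exact .refl _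
  | arrow _ h | prod _ h | sum _ h => exact h
  | list h => exact .prod h (.list h)

theorem arrow_inj {A B A' B' : Ty} (h : TyEq (.arrow A B) (.arrow A' B')) :
    TyEq A A' ∧ TyEq B B' :=
  ⟨h.leftArg, h.rightArg⟩

theorem prod_inj {A B A' B' : Ty} (h : TyEq (.prod A B) (.prod A' B')) :
    TyEq A A' ∧ TyEq B B' :=
  ⟨h.leftArg, h.rightArg⟩

theorem sum_inj {A B A' B' : Ty} (h : TyEq (.sum A B) (.sum A' B')) :
    TyEq A A' ∧ TyEq B B' :=
  ⟨h.leftArg, h.rightArg⟩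

end TyEq

theorem List.getElem?_append_replicate {α : Type*} {l : List α} {a : α} {n j : ℕ}
    (hj : j < n) :
    (l ++ List.replicate n a)[l.length + j]? = some a := by
  simp [hj]

def Tm.constTy : Tm → Option Ty
  | .skip => some .unit
  | .tt | .ff => some .bit
  | .notOp => some (.arrow .bit .bit)
  | .andOp | .xorOp => some (.arrow (.prod .bit .bit) .bit)
  | _ => none

namespace HasType

variable {Δ Γ : List Ty} {M N P f : Tm} {A B T : Ty} {n : ℕ}

theorem tyEq_of_constTy (h : HasType Δ M T) (hM : M.constTy = some A) : TyEq A T := by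
  induction h with
  | conv _ he ih => exact (ih hM).trans he
  | _ =>
    simp only [Tm.constTy, reduceCtorEq, Option.some.injEq] at hM <;> subst hM <;> exact .refl _

theorem inv_var (h : HasType Δ (.var n) T) : ∃ A, Δ[n]? = some A ∧ TyEq A T := by
  generalize e : Tm.var n = t at h
  induction h with
  | var hget => cases e; exact ⟨_, hget, .refl _⟩
  | conv _ he ih => exact (ih e).imp fun _ ⟨hget, hA⟩ => ⟨hget, hA.trans he⟩
  | _ => cases e

theorem inv_lam (h : HasType Δ (.lam M) T) :
    ∃ A B, HasType (A :: Δ) M B ∧ TyEq (.arrow A B) T := by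
  generalize e : Tm.lam M = t at h
  induction h with
  | lam hM => cases e; exact ⟨_, _, hM, .refl _⟩
  | conv _ he ih => exact (ih e).imp fun _ ⟨B, hM, hT⟩ => ⟨B, hM, hT.trans he⟩
  | _ => cases e

theorem inv_app (h : HasType Δ (.app M N) B) :
    ∃ A, HasType Δ M (.arrow A B) ∧ HasType Δ N A := by
  generalize e : Tm.app M N = t at h
  induction h with
  | app hM hN => cases e; exact ⟨_, hM, hN⟩
  | conv _ he ih => exact (ih e).imp fun _ ⟨hM, hN⟩ => ⟨hM.conv (.arrow (.refl _) he), hN⟩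
  | _ => cases e

theorem inv_pair (h : HasType Δ (.pair M N) T) :
    ∃ A B, HasType Δ M A ∧ HasType Δ N B ∧ TyEq (.prod A B) T := by
  generalize e : Tm.pair M N = t at h
  induction h with
  | pair hM hN => cases e; exact ⟨_, _, hM, hN, .refl _⟩
  | conv _ he ih => exact (ih e).imp fun _ ⟨B, hM, hN, hT⟩ => ⟨B, hM, hN, hT.trans he⟩
  | _ => cases e

theorem inv_fst (h : HasType Δ (.fst M) A) : ∃ B, HasType Δ M (.prod A B) := by
  generalize e : Tm.fst M = t at h
  induction h with
  | fst hM => cases e; exact ⟨_, hM⟩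
  | conv _ he ih => exact (ih e).imp fun _ hM => hM.conv (.prod he (.refl _))
  | _ => cases e

theorem inv_snd (h : HasType Δ (.snd M) B) : ∃ A, HasType Δ M (.prod A B) := by
  generalize e : Tm.snd M = t at h
  induction h with
  | snd hM => cases e; exact ⟨_, hM⟩
  | conv _ he ih => exact (ih e).imp fun _ hM => hM.conv (.prod (.refl _) he)
  | _ => cases e

theorem inv_letUnit (h : HasType Δ (.letUnit M N) B) : HasType Δ M .unit ∧ HasType Δ N B := by
  generalize e : Tm.letUnit M N = t at h
  induction h with
  | letUnit hM hN => cases e; exact ⟨hM, hN⟩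
  | conv _ he ih => exact (ih e).imp_right (·.conv he)
  | _ => cases e

theorem inv_ite (h : HasType Δ (.ite P M N) T) :
    ∃ A, HasType Δ P .bit ∧ HasType Δ M A ∧ HasType Δ N A ∧ FirstOrder A ∧
      TyEq A T := by
  generalize e : Tm.ite P M N = t at h
  induction h with
  | ite hP hM hN hA => cases e; exact ⟨_, hP, hM, hN, hA, .refl _⟩
  | conv _ he ih =>
      exact (ih e).imp fun _ ⟨hP, hM, hN, hA, hT⟩ => ⟨hP, hM, hN, hA, hT.trans he⟩
  | _ => cases e

theorem inv_inl (h : HasType Δ (.inl M) T) : ∃ A B, HasType Δ M A ∧ TyEq (.sum A B) T := by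
  generalize e : Tm.inl M = t at h
  induction h with
  | inl hM => cases e; exact ⟨_, _, hM, .refl _⟩
  | conv _ he ih => exact (ih e).imp fun _ ⟨B, hM, hT⟩ => ⟨B, hM, hT.trans he⟩
  | _ => cases e

theorem inv_inr (h : HasType Δ (.inr M) T) : ∃ A B, HasType Δ M B ∧ TyEq (.sum A B) T := by
  generalize e : Tm.inr M = t at h
  induction h with
  | inr hM => cases e; exact ⟨_, _, hM, .refl _⟩
  | conv _ he ih => exact (ih e).imp fun _ ⟨B, hM, hT⟩ => ⟨B, hM, hT.trans he⟩
  | _ => cases e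

theorem inv_matchSum (h : HasType Δ (.matchSum P M N) T) :
    ∃ A B, HasType Δ P (.sum A B) ∧ HasType (A :: Δ) M T ∧ HasType (B :: Δ) N T := by
  generalize e : Tm.matchSum P M N = t at h
  induction h with
  | matchSum hP hM hN => cases e; exact ⟨_, _, hP, hM, hN⟩
  | conv _ he ih =>
      exact (ih e).imp fun _ ⟨B, hP, hM, hN⟩ => ⟨B, hP, hM.conv he, hN.conv he⟩
  | _ => cases e

theorem inv_split (h : HasType Δ .split T) :
    ∃ A, TyEq (.arrow (.list A) (.sum .unit (.prod A (.list A)))) T := by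
  generalize e : Tm.split = t at h
  induction h with
  | split => exact ⟨_, .refl _⟩
  | conv _ he ih => exact (ih e).imp fun _ hT => hT.trans he
  | _ => cases e

theorem inv_fix (h : HasType Δ (.fix M) A) : HasType Δ M (.arrow A A) := by
  generalize e : Tm.fix M = t at h
  induction h with
  | fix hM => cases e; exact hM
  | conv _ he ih => exact (ih e).conv (.arrow he he)
  | _ => cases e

theorem weaken (h : HasType Δ M A) (Δ' : List Ty) : HasType (Δ ++ Δ') M A := by
  induction h with
  | var hget =>
      exact .var (List.getElem?_append_left (List.getElem?_eq_some_iff.mp hget).1 ▸ hget)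
  | conv _ he ih => exact ih.conv he
  | _ => constructor <;> assumption

theorem lift {Ξ Γ₁ Γ₂ : List Ty} (h : HasType (Γ₁ ++ Γ₂) M A) :
    HasType (Γ₁ ++ Ξ ++ Γ₂) (liftTm Ξ.length Γ₁.length M) A := by
  generalize e : Γ₁ ++ Γ₂ = Δ at h
  induction h generalizing Γ₁ with
  | @var _ n _ hget =>
      subst e
      unfold liftTm
      split_ifs with hn <;> refine .var ?_
      · rwa [List.append_assoc, List.getElem?_append_left hn, ← List.getElem?_append_left hn]
      · rw [List.getElem?_append_right (by omega)] at hget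
        rw [List.getElem?_append_right (by simp; omega), List.length_append,
          show n + Ξ.length - (Γ₁.length + Ξ.length) = n - Γ₁.length by omega]
        exact hget
  | lam _ ih => exact .lam (ih (Γ₁ := _ :: Γ₁) (by rw [← e]; rfl))
  | matchSum _ _ _ ih₁ ih₂ ih₃ =>
      exact .matchSum (ih₁ e) (ih₂ (Γ₁ := _ :: Γ₁) (by rw [← e]; rfl))
        (ih₃ (Γ₁ := _ :: Γ₁) (by rw [← e]; rfl))
  | conv _ he ih => exact (ih e).conv he
  | _ => constructor <;> first | assumption | (apply_assumption; exact e)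

theorem substitution {Γ₁ Γ₂ : List Ty} (h : HasType (Γ₁ ++ A :: Γ₂) M B)
    (hN : HasType Γ₂ N A) :
    HasType (Γ₁ ++ Γ₂) (subst N Γ₁.length M) B := by
  generalize e : Γ₁ ++ A :: Γ₂ = Δ at h
  induction h generalizing Γ₁ with
  | @var _ n _ hget =>
      subst e
      unfold subst
      rcases lt_trichotomy n Γ₁.length with hn | rfl | hn
      · rw [if_neg hn.ne, if_neg (by omega)]
        exact .var (by rwa [List.getElem?_append_left hn] at hget ⊢)
      · rw [List.getElem?_append_right le_rfl, Nat.sub_self] at hget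
        cases hget
        simpa using hN.lift (Γ₁ := []) (Ξ := Γ₁)
      · rw [if_neg hn.ne', if_pos hn]
        refine .var ?_
        rw [List.getElem?_append_right (by omega),
          show n - Γ₁.length = n - 1 - Γ₁.length + 1 by omega] at hget
        rwa [List.getElem?_append_right (by omega)]
  | lam _ ih => exact .lam (ih (Γ₁ := _ :: Γ₁) (by rw [← e]; rfl))
  | matchSum _ _ _ ih₁ ih₂ ih₃ =>
      exact .matchSum (ih₁ e) (ih₂ (Γ₁ := _ :: Γ₁) (by rw [← e]; rfl))
        (ih₃ (Γ₁ := _ :: Γ₁) (by rw [← e]; rfl))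
  | conv _ he ih => exact (ih e).conv he
  | _ => constructor <;> first | assumption | (apply_assumption; exact e)

theorem subst_zero (hM : HasType (A :: Δ) M B) (hN : HasType Δ N A) :
    HasType Δ (subst N 0 M) B :=
  hM.substitution (Γ₁ := []) hN

theorem var_bit {j : ℕ} (hj : j < n) :
    HasType (Γ ++ List.replicate n .bit) (.var (Γ.length + j)) .bit :=
  .var (List.getElem?_append_replicate hj)

theorem tyEq_of_var_bit {j : ℕ} (hj : j < n)
    (h : HasType (Γ ++ List.replicate n .bit) (.var (Γ.length + j)) A) : TyEq .bit A := by
  obtain ⟨B, hB, hBA⟩ := h.inv_var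
  rw [List.getElem?_append_replicate hj, Option.some.injEq] at hB
  exact hB ▸ hBA

theorem weaken_bits {n' : ℕ} (h : HasType (Γ ++ List.replicate n .bit) M A) (hn : n ≤ n') :
    HasType (Γ ++ List.replicate n' .bit) M A := by
  obtain ⟨k, rfl⟩ := Nat.exists_eq_add_of_le hn
  rw [List.replicate_add, ← List.append_assoc]
  exact h.weaken _

theorem beta_reduct (h : HasType Δ (.app (.lam M) N) A) : HasType Δ (subst N 0 M) A := by
  obtain ⟨B, hlam, hN⟩ := h.inv_app
  obtain ⟨B', A', hM, he⟩ := hlam.inv_lam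
  obtain ⟨hB, hA⟩ := he.arrow_inj
  exact (hM.subst_zero (hN.conv hB.symm)).conv hA

theorem fst_pair_reduct (h : HasType Δ (.fst (.pair M N)) A) : HasType Δ M A := by
  obtain ⟨B, hp⟩ := h.inv_fst
  obtain ⟨A', B', hM, -, he⟩ := hp.inv_pair
  exact hM.conv he.prod_inj.1

theorem snd_pair_reduct (h : HasType Δ (.snd (.pair M N)) B) : HasType Δ N B := by
  obtain ⟨A, hp⟩ := h.inv_snd
  obtain ⟨A', B', -, hN, he⟩ := hp.inv_pair
  exact hN.conv he.prod_inj.2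

theorem split_reduct (h : HasType Δ (.app .split M) A) : HasType Δ M A := by
  obtain ⟨B, hsplit, hM⟩ := h.inv_app
  obtain ⟨X, he⟩ := hsplit.inv_split
  obtain ⟨hB, hA⟩ := he.arrow_inj
  exact hM.conv (hB.symm.trans ((TyEq.fold X).symm.trans hA))

theorem matchSum_inl_reduct (h : HasType Δ (.matchSum (.inl P) M N) A) :
    HasType Δ (subst P 0 M) A := by
  obtain ⟨X, Y, hinl, hM, -⟩ := h.inv_matchSum
  obtain ⟨X', Y', hP, he⟩ := hinl.inv_inl
  exact hM.subst_zero (hP.conv he.sum_inj.1)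

theorem matchSum_inr_reduct (h : HasType Δ (.matchSum (.inr P) M N) A) :
    HasType Δ (subst P 0 N) A := by
  obtain ⟨X, Y, hinr, -, hN⟩ := h.inv_matchSum
  obtain ⟨X', Y', hP, he⟩ := hinr.inv_inr
  exact hN.subst_zero (hP.conv he.sum_inj.2)

theorem fix_reduct (h : HasType Δ (.fix M) A) : HasType Δ (.app M (.fix M)) A :=
  .app h.inv_fix (.fix h.inv_fix)

theorem tyEq_of_app_const {C : Ty} (h : HasType Δ (.app f M) A)
    (hf : f.constTy = some (.arrow B C)) :
    TyEq C A := by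
  obtain ⟨B', hf', -⟩ := h.inv_app
  exact (hf'.tyEq_of_constTy hf).arrow_inj.2

theorem fresh_var {L : List ℕ} {w : ℕ} (hA : TyEq .bit A) :
    HasType (Γ ++ List.replicate (L ++ [w]).length .bit) (.var (Γ.length + L.length)) A :=
  (var_bit (by simp)).conv hA

end HasType

theorem AMStep.length_le {I : Finset ℕ} {d : ℕ} {M N : Tm} {C C' : List Gate} {L L' : List ℕ}
    (h : AMStep I d M C L N C' L') : L.length ≤ L'.length := by
  induction h <;> first | assumption | simp

namespace IteAux

variable {d : ℕ} {L : List ℕ} {n n' : ℕ} {V W U : Tm} {ps : List (ℕ × ℕ)}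

theorem length_eq (h : IteAux d L n V W U n' ps) : n' = n + ps.length := by
  induction h with
  | var | nil => simp
  | pair _ _ ih₁ ih₂ | cons _ _ ih₁ ih₂ =>
      simp only [ih₁, ih₂, List.length_append]; omega

theorem hasType {Γ : List Ty} (hd : Γ.length = d) {K : ℕ} (h : IteAux d L n V W U n' ps)
    (hK : n' ≤ K) {A : Ty} (hV : HasType (Γ ++ List.replicate L.length .bit) V A) :
    HasType (Γ ++ List.replicate K .bit) U A := by
  subst hd
  induction h generalizing A with
  | var hj => exact (HasType.var_bit (by omega)).conv (hV.tyEq_of_var_bit hj)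
  | pair h₁ h₂ ih₁ ih₂ =>
      obtain ⟨A₁, A₂, hV₁, hV₂, hA⟩ := hV.inv_pair
      have hn₁ := h₂.length_eq
      exact .conv (.pair (ih₁ (by omega) hV₁) (ih₂ hK hV₂)) hA
  | nil =>
      obtain ⟨A₁, A₂, hskip, hA⟩ := hV.inv_inl
      exact .conv (.inl (.conv .skip (hskip.tyEq_of_constTy rfl))) hA
  | cons h₁ h₂ ih₁ ih₂ =>
      obtain ⟨A₁, A₂, hV', hA⟩ := hV.inv_inr
      obtain ⟨B₁, B₂, hV₁, hV₂, hB⟩ := hV'.inv_pair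
      have hn₁ := h₂.length_eq
      exact .conv (.inr (.conv (.pair (ih₁ (by omega) hV₁) (ih₂ hK hV₂)) hB)) hA

end IteAux

theorem AMStep.preservation {I : Finset ℕ} {d : ℕ} {M N : Tm} {C C' : List Gate}
    {L L' : List ℕ} (hs : AMStep I d M C L N C' L') {Γ : List Ty} (hd : Γ.length = d) {A : Ty}
    (ht : HasType (Γ ++ List.replicate L.length .bit) M A) :
    HasType (Γ ++ List.replicate L'.length .bit) N A := by
  induction hs generalizing Γ A with
  | beta => exact ht.beta_reduct
  | fstPair => exact ht.fst_pair_reduct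
  | sndPair => exact ht.snd_pair_reduct
  | letU => exact ht.inv_letUnit.2
  | splitRed => exact ht.split_reduct
  | matchInl => exact ht.matchSum_inl_reduct
  | matchInr => exact ht.matchSum_inr_reduct
  | fixRed => exact ht.fix_reduct
  | ffRed | ttRed => subst hd; exact .fresh_var (ht.tyEq_of_constTy rfl)
  | notRed | andRed | xorRed => subst hd; exact .fresh_var (ht.tyEq_of_app_const rfl)
  | iteRed _ _ _ _ _ _ _ _ _ _ _ ha hlen =>
      obtain ⟨B, -, hV, -, -, hB⟩ := ht.inv_ite
      refine (ha.hasType hd ?_ hV).conv hB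
      simp [ha.length_eq, hlen]
  | iteErr => exact .err
  | lamC _ ih =>
      obtain ⟨B, B', hM, he⟩ := ht.inv_lam
      exact .conv (.lam (ih (Γ := B :: Γ) (by simp [hd]) hM)) he
  | appL _ hs ih =>
      obtain ⟨B, hM, hN⟩ := ht.inv_app
      exact .app (ih hd hM) (hN.weaken_bits hs.length_le)
  | appR _ hs ih =>
      obtain ⟨B, hM, hN⟩ := ht.inv_app
      exact .app (hM.weaken_bits hs.length_le) (ih hd hN)
  | pairL _ hs ih =>
      obtain ⟨B, B', hM, hN, he⟩ := ht.inv_pair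
      exact .conv (.pair (ih hd hM) (hN.weaken_bits hs.length_le)) he
  | pairR _ hs ih =>
      obtain ⟨B, B', hM, hN, he⟩ := ht.inv_pair
      exact .conv (.pair (hM.weaken_bits hs.length_le) (ih hd hN)) he
  | fstC _ ih => exact .fst (ih hd ht.inv_fst.choose_spec)
  | sndC _ ih => exact .snd (ih hd ht.inv_snd.choose_spec)
  | letL _ hs ih =>
      obtain ⟨hM, hN⟩ := ht.inv_letUnit
      exact .letUnit (ih hd hM) (hN.weaken_bits hs.length_le)
  | letR _ hs ih =>
      obtain ⟨hM, hN⟩ := ht.inv_letUnit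
      exact .letUnit (hM.weaken_bits hs.length_le) (ih hd hN)
  | ite1 _ _ hs ih =>
      obtain ⟨B, hP, hM, hN, hB, he⟩ := ht.inv_ite
      have hle := hs.length_le
      exact .conv (.ite (ih hd hP) (hM.weaken_bits hle) (hN.weaken_bits hle) hB) he
  | ite2 _ _ hs ih =>
      obtain ⟨B, hP, hM, hN, hB, he⟩ := ht.inv_ite
      have hle := hs.length_le
      exact .conv (.ite (hP.weaken_bits hle) (ih hd hM) (hN.weaken_bits hle) hB) he
  | ite3 _ _ hs ih =>
      obtain ⟨B, hP, hM, hN, hB, he⟩ := ht.inv_ite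
      have hle := hs.length_le
      exact .conv (.ite (hP.weaken_bits hle) (hM.weaken_bits hle) (ih hd hN) hB) he
  | inlC _ ih =>
      obtain ⟨B, B', hM, he⟩ := ht.inv_inl
      exact .conv (.inl (ih hd hM)) he
  | inrC _ ih =>
      obtain ⟨B, B', hM, he⟩ := ht.inv_inr
      exact .conv (.inr (ih hd hM)) he
  | match1 _ _ hs ih =>
      obtain ⟨X, Y, hP, hM, hN⟩ := ht.inv_matchSum
      exact .matchSum (ih hd hP) (hM.weaken_bits (Γ := X :: Γ) hs.length_le)
        (hN.weaken_bits (Γ := Y :: Γ) hs.length_le)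
  | match2 _ _ hs ih =>
      obtain ⟨X, Y, hP, hM, hN⟩ := ht.inv_matchSum
      exact .matchSum (hP.weaken_bits hs.length_le) (ih (Γ := X :: Γ) (by simp [hd]) hM)
        (hN.weaken_bits (Γ := Y :: Γ) hs.length_le)
  | match3 _ _ hs ih =>
      obtain ⟨X, Y, hP, hM, hN⟩ := ht.inv_matchSum
      exact .matchSum (hP.weaken_bits hs.length_le) (hM.weaken_bits (Γ := X :: Γ) hs.length_le)
        (ih (Γ := Y :: Γ) (by simp [hd]) hN)
  | fixC _ ih => exact .fix (ih hd ht.inv_fix)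

theorem am_preservation_general (I : Finset ℕ) (M N : Tm) (C C' : List Gate)
    (L L' : List ℕ) (m : ℕ)
    (ht : HasType (List.replicate L.length Ty.bit) M (bitPow m))
    (hs : AMStep I 0 M C L N C' L') :
    HasType (List.replicate L'.length Ty.bit) N (bitPow m) :=
  hs.preservation (Γ := []) rfl ht

/-- type preservation for the circuit-generating abstract
machine.  If `p₁:bit, …, p_{#L}:bit ⊢ M : bit^m` and the machine
`(M, RC, L)` steps to `(N, RC', L')`, then
`p₁:bit, …, p_{#L'}:bit ⊢ N : bit^m`. -/
theorem am_preservation (I : Finset ℕ) (M N : Tm) (C C' : List Gate)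
    (L L' : List ℕ) (m : ℕ) (hL : L.Nodup)
    (ht : HasType (List.replicate L.length Ty.bit) M (bitPow m))
    (hs : AMStep I 0 M C L N C' L') :
    HasType (List.replicate L'.length Ty.bit) N (bitPow m) :=
  am_preservation_general I M N C C' L L' m ht hs
end

section
/- Progress for the circuit-generating abstract machine: if p₁:bit,...,p_{#L}:bit ⊢ M : bit^m and (M, RC, L) is an abstract machine state, then either M is a value, or M contains the subterm Err, or (M, RC, L) reduces via →_am. -/
set_option autoImplicit true
set_option maxHeartbeats 1000000


/-- Values of the abstract machine: ordinary values together with the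
linked variables `pᵢ`. -/
inductive MValue : Tm → Prop
  | var (n) : MValue (.var n)
  | lam (M) : MValue (.lam M)
  | pair {M N} : MValue M → MValue N → MValue (.pair M N)
  | inl {M} : MValue M → MValue (.inl M)
  | inr {M} : MValue M → MValue (.inr M)
  | skip : MValue .skip
  | tt : MValue .tt
  | ff : MValue .ff
  | notOp : MValue .notOp
  | andOp : MValue .andOp
  | xorOp : MValue .xorOp
  | split : MValue .split

/-!
Progress is proved by induction on the typing derivation, as for PCF. Typing holds only up to the
type equation `[A] = 1 ⊕ (A × [A])`, so canonical forms are read off the *shape* of a type, the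
head constructors of its infinite unfolding, which that equation does not change. In a context of
bits a value of type `bit` is `tt`, `ff` or a linked variable; the constants reduce by allocating a
fresh wire (only finitely many wires are in use), and the boolean operators then fire on linked
variables. The branches of an `if` are values of first-order type, hence first-order extensions of
the linking function once their constants are allocated, and on those the machine either emits the
multiplexing gates or, when the two shapes differ, steps to `Err`.
-/

inductive TyHead : Type
  | bit | unit | arrow | prod | sum

/-- The head constructors of the infinite unfolding of a type, read along a path of left/right
choices; a list type unfolds to `1 ⊕ (A × [A])`. -/
def Ty.shape : Ty → List Bool → TyHead
  | .bit, _ => .bit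
  | .unit, [] => .unit
  | .unit, _ :: _ => .bit
  | .arrow _ _, [] => .arrow
  | .arrow A _, false :: p => shape A p
  | .arrow _ B, true :: p => shape B p
  | .prod _ _, [] => .prod
  | .prod A _, false :: p => shape A p
  | .prod _ B, true :: p => shape B p
  | .sum _ _, [] => .sum
  | .sum A _, false :: p => shape A p
  | .sum _ B, true :: p => shape B p
  | .list _, [] => .sum
  | .list _, false :: p => shape .unit p
  | .list A, true :: p => shape (.prod A (.list A)) p
termination_by _ p => p.length

namespace Ty

theorem shape_list_congr {A A' : Ty} (h : A.shape = A'.shape) :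
    ∀ p, (list A).shape p = (list A').shape p
  | [] | false :: _ | [true] => by simp [shape]
  | true :: false :: r => by simpa [shape] using congrFun h r
  | true :: true :: r => by simpa [shape] using shape_list_congr h r
termination_by p => p.length

theorem shape_prod_inj {A₁ A₂ B₁ B₂ : Ty}
    (h : (prod A₁ A₂).shape = (prod B₁ B₂).shape) :
    A₁.shape = B₁.shape ∧ A₂.shape = B₂.shape :=
  ⟨funext fun p => by simpa [shape] using congrFun h (false :: p),
    funext fun p => by simpa [shape] using congrFun h (true :: p)⟩

theorem shape_sum_inj {A₁ A₂ B₁ B₂ : Ty}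
    (h : (sum A₁ A₂).shape = (sum B₁ B₂).shape) :
    A₁.shape = B₁.shape ∧ A₂.shape = B₂.shape :=
  ⟨funext fun p => by simpa [shape] using congrFun h (false :: p),
    funext fun p => by simpa [shape] using congrFun h (true :: p)⟩

theorem shape_arrow_inj {A₁ A₂ B₁ B₂ : Ty}
    (h : (arrow A₁ A₂).shape = (arrow B₁ B₂).shape) :
    A₁.shape = B₁.shape ∧ A₂.shape = B₂.shape :=
  ⟨funext fun p => by simpa [shape] using congrFun h (false :: p),
    funext fun p => by simpa [shape] using congrFun h (true :: p)⟩

end Ty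

theorem TyEq.shape_eq {A B : Ty} (h : TyEq A B) : A.shape = B.shape := by
  induction h with
  | refl => rfl
  | symm _ ih => exact ih.symm
  | trans _ _ ih₁ ih₂ => exact ih₁.trans ih₂
  | fold => funext p; rcases p with _ | ⟨_ | _, _⟩ <;> simp [Ty.shape]
  | arrow _ _ ih₁ ih₂ | prod _ _ ih₁ ih₂ | sum _ _ ih₁ ih₂ =>
    funext p; rcases p with _ | ⟨_ | _, q⟩ <;> simp [Ty.shape, ih₁, ih₂]
  | list _ ih => exact funext (Ty.shape_list_congr ih)

/-- What a typing `Δ ⊢ V : A` of a value form reveals: the premises of the syntax-directed rule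
for `V`, with its conclusion type equal to `A` up to shape (so that `conv` steps are absorbed). -/
def Inversion (Δ : List Ty) : Tm → (List Bool → TyHead) → Prop
  | .var n, s => ∃ B, Δ[n]? = some B ∧ B.shape = s
  | .lam _, s => ∃ A B, (Ty.arrow A B).shape = s
  | .pair M N, s => ∃ A B, HasType Δ M A ∧ HasType Δ N B ∧ (Ty.prod A B).shape = s
  | .inl M, s => ∃ A B, HasType Δ M A ∧ (Ty.sum A B).shape = s
  | .inr M, s => ∃ A B, HasType Δ M B ∧ (Ty.sum A B).shape = s
  | .skip, s => Ty.unit.shape = s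
  | .tt, s | .ff, s => Ty.bit.shape = s
  | .notOp, s => (Ty.arrow .bit .bit).shape = s
  | .andOp, s | .xorOp, s => (Ty.arrow (.prod .bit .bit) .bit).shape = s
  | .split, s => ∃ A, (Ty.arrow (.list A) (.sum .unit (.prod A (.list A)))).shape = s
  | _, _ => True

theorem HasType.inversion {Δ : List Ty} {V : Tm} {A : Ty} (ht : HasType Δ V A) :
    Inversion Δ V A.shape := by
  induction ht with
  | conv _ e ih => exact e.shape_eq ▸ ih
  | var h => exact ⟨_, h, rfl⟩
  | pair h₁ h₂ => exact ⟨_, _, h₁, h₂, rfl⟩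
  | inl h | inr h => exact ⟨_, _, h, rfl⟩
  | lam => exact ⟨_, _, rfl⟩
  | split => exact ⟨_, rfl⟩
  | _ => trivial

/-- The head of the type of a value in a context of bits; the wildcard covers abstractions, the
boolean operators and `split` (and, as a junk value, non-values). -/
def Tm.valueHead : Tm → TyHead
  | .var _ | .tt | .ff => .bit
  | .skip => .unit
  | .pair _ _ => .prod
  | .inl _ | .inr _ => .sum
  | _ => .arrow

theorem lt_of_getElem?_replicate_eq_some {α : Type*} {k n : ℕ} {a b : α}
    (h : (List.replicate k a)[n]? = some b) : n < k := by
  simpa using (List.getElem?_eq_some_iff.1 h).1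

theorem FirstOrder.shape_nil {B : Ty} (hB : FirstOrder B) :
    B.shape [] = .bit ∨ B.shape [] = .prod ∨ B.shape [] = .sum := by
  cases hB <;> simp [Ty.shape]

section CanonicalForms

variable {k : ℕ} {V : Tm} {A : Ty}

theorem MValue.shape_nil_eq (hv : MValue V) (ht : HasType (List.replicate k .bit) V A) :
    A.shape [] = V.valueHead := by
  have hinv := ht.inversion
  cases hv <;> simp only [Inversion] at hinv
  case var =>
    obtain ⟨B, hB, hs⟩ := hinv
    obtain rfl : B = .bit := List.eq_of_mem_replicate (List.mem_of_getElem? hB)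
    simp [← hs, Ty.shape, Tm.valueHead]
  case pair => obtain ⟨_, _, _, _, hs⟩ := hinv; simp [← hs, Ty.shape, Tm.valueHead]
  case inl | inr => obtain ⟨_, _, _, hs⟩ := hinv; simp [← hs, Ty.shape, Tm.valueHead]
  case lam => obtain ⟨_, _, hs⟩ := hinv; simp [← hs, Ty.shape, Tm.valueHead]
  case split => obtain ⟨_, hs⟩ := hinv; simp [← hs, Ty.shape, Tm.valueHead]
  all_goals simp [← hinv, Ty.shape, Tm.valueHead]

variable (hv : MValue V) (ht : HasType (List.replicate k .bit) V A)
include hv ht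

theorem MValue.eq_skip_of_shape_unit (hA : A.shape [] = .unit) : V = .skip := by
  have h := hA ▸ hv.shape_nil_eq ht
  cases hv <;> simp [Tm.valueHead] at h ⊢

theorem MValue.eq_pair_of_shape_prod (hA : A.shape [] = .prod) :
    ∃ M N, V = .pair M N ∧ MValue M ∧ MValue N := by
  have h := hA ▸ hv.shape_nil_eq ht
  cases hv
  case pair hM hN => exact ⟨_, _, rfl, hM, hN⟩
  all_goals simp [Tm.valueHead] at h

theorem MValue.eq_inl_or_inr_of_shape_sum (hA : A.shape [] = .sum) :
    (∃ M, V = .inl M) ∨ ∃ M, V = .inr M := by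
  have h := hA ▸ hv.shape_nil_eq ht
  cases hv <;> simp [Tm.valueHead] at h ⊢

theorem MValue.eq_of_shape_bit (hA : A.shape [] = .bit) :
    V = .tt ∨ V = .ff ∨ ∃ n, V = .var n := by
  have h := hA ▸ hv.shape_nil_eq ht
  cases hv <;> simp [Tm.valueHead] at h ⊢

theorem MValue.eq_of_shape_arrow (hA : A.shape [] = .arrow) :
    (∃ M, V = .lam M) ∨ V = .split ∨ V = .notOp ∨ V = .andOp ∨ V = .xorOp := by
  have h := hA ▸ hv.shape_nil_eq ht
  cases hv <;> simp [Tm.valueHead] at h ⊢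

theorem MValue.valueHead_of_firstOrder {B : Ty} (hB : FirstOrder B) (hs : B.shape = A.shape) :
    V.valueHead = .bit ∨ V.valueHead = .prod ∨ V.valueHead = .sum :=
  hv.shape_nil_eq ht ▸ hs ▸ hB.shape_nil

end CanonicalForms

theorem Gate.finite_wires (g : Gate) : g.wires.Finite := by
  refine ((List.finite_toSet g.controls).image Prod.fst).insert g.active |>.subset ?_
  rintro w (rfl | ⟨b, hb⟩)
  exacts [Set.mem_insert _ _, Set.mem_insert_of_mem _ ⟨(w, b), hb, rfl⟩]

theorem finite_circuitWires (C : List Gate) : (circuitWires C).Finite := by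
  convert (List.finite_toSet C).biUnion fun g _ => g.finite_wires using 1
  ext w; simp [circuitWires]

section FreshWires

variable (I : Finset ℕ) (C : List Gate) (L : List ℕ)

theorem finite_setOf_not_freshWire : {w | ¬ FreshWire I C L w}.Finite := by
  refine ((I.finite_toSet.union (finite_circuitWires C)).union (List.finite_toSet L)).subset ?_
  intro w hw
  simp only [FreshWire, Set.mem_ofPred_eq] at hw
  simp only [Set.mem_union, Finset.mem_coe, Set.mem_ofPred_eq]
  tauto

theorem exists_freshWires (k : ℕ) :
    ∃ ws : List ℕ, ws.length = k ∧ ws.Nodup ∧ ∀ w ∈ ws, FreshWire I C L w := by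
  obtain ⟨b, hb⟩ := (finite_setOf_not_freshWire I C L).bddAbove
  refine ⟨List.range' (b + 1) k, List.length_range', List.nodup_range', fun w hw => ?_⟩
  by_contra hw'
  have hle : w ≤ b := hb hw'
  have hlt : b + 1 ≤ w := (List.mem_range'_1.1 hw).1
  omega

theorem exists_freshWire : ∃ w, FreshWire I C L w :=
  (finite_setOf_not_freshWire I C L).exists_notMem.imp fun _ => not_not.1

end FreshWires

def AMReducible (I : Finset ℕ) (C : List Gate) (L : List ℕ) (M : Tm) : Prop :=
  ∃ N C' L', AMStep I 0 M C L N C' L'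

def AMProgress (I : Finset ℕ) (C : List Gate) (L : List ℕ) (M : Tm) : Prop :=
  MValue M ∨ ContainsErr M ∨ AMReducible I C L M

section Progress

variable {I : Finset ℕ} {C : List Gate} {L : List ℕ} {V : Tm} {A : Ty}

theorem AMProgress.bind {M M' : Tm} (h : AMProgress I C L M)
    (herr : ContainsErr M → ContainsErr M')
    (hstep : ∀ {N C' L'}, AMStep I 0 M C L N C' L' → AMReducible I C L M')
    (hval : MValue M → AMProgress I C L M') : AMProgress I C L M' := by
  rcases h with hv | he | ⟨_, _, _, hs⟩
  exacts [hval hv, .inr (.inl (herr he)), .inr (.inr (hstep hs))]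

variable (I C L) in
theorem reducible_tt : AMReducible I C L .tt :=
  (exists_freshWire I C L).elim fun w hw => ⟨_, _, _, .ttRed 0 C L w hw⟩

variable (I C L) in
theorem reducible_ff : AMReducible I C L .ff :=
  (exists_freshWire I C L).elim fun w hw => ⟨_, _, _, .ffRed 0 C L w hw⟩

theorem MValue.linkedVar_or_reducible (hv : MValue V)
    (ht : HasType (List.replicate L.length .bit) V A) (hA : A.shape [] = .bit) :
    (∃ j < L.length, V = .var j) ∨ AMReducible I C L V := by
  rcases hv.eq_of_shape_bit ht hA with rfl | rfl | ⟨n, rfl⟩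
  · exact .inr (reducible_tt I C L)
  · exact .inr (reducible_ff I C L)
  · obtain ⟨B, hB, -⟩ := ht.inversion
    exact .inl ⟨n, lt_of_getElem?_replicate_eq_some hB, rfl⟩

theorem MValue.foExt_or_reducible (hv : MValue V)
    (ht : HasType (List.replicate L.length .bit) V A)
    (hA : ∃ B, FirstOrder B ∧ B.shape = A.shape) :
    FOExt 0 L V ∨ AMReducible I C L V := by
  induction hv generalizing A with
  | var n =>
    obtain ⟨B, hB, -⟩ := ht.inversion
    simpa using Or.inl (FOExt.var (d := 0) (L := L) (lt_of_getElem?_replicate_eq_some hB))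
  | tt => exact .inr (reducible_tt I C L)
  | ff => exact .inr (reducible_ff I C L)
  | pair _ _ ih₁ ih₂ =>
    obtain ⟨B, hB, hs⟩ := hA
    obtain ⟨A₁, A₂, h₁, h₂, hs'⟩ := ht.inversion
    cases hB with
    | prod hB₁ hB₂ =>
      obtain ⟨e₁, e₂⟩ := Ty.shape_prod_inj (hs.trans hs'.symm)
      rcases ih₁ h₁ ⟨_, hB₁, e₁⟩ with f₁ | ⟨_, _, _, s₁⟩
      · rcases ih₂ h₂ ⟨_, hB₂, e₂⟩ with f₂ | ⟨_, _, _, s₂⟩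
        exacts [.inl (.pair f₁ f₂), .inr ⟨_, _, _, .pairR _ s₂⟩]
      · exact .inr ⟨_, _, _, .pairL _ s₁⟩
    | bit | list => simpa [Ty.shape] using congrFun (hs.trans hs'.symm) []
  | inl hv' =>
    obtain ⟨B, hB, hs⟩ := hA
    obtain ⟨A₁, A₂, h₁, hs'⟩ := ht.inversion
    cases hB with
    | list hB' =>
      obtain ⟨e₁, -⟩ := Ty.shape_sum_inj ((TyEq.fold _).shape_eq.trans (hs.trans hs'.symm))
      obtain rfl := hv'.eq_skip_of_shape_unit h₁ (by simp [← e₁, Ty.shape])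
      exact .inl .nil
    | bit | prod => simpa [Ty.shape] using congrFun (hs.trans hs'.symm) []
  | inr hv' ih =>
    obtain ⟨B, hB, hs⟩ := hA
    obtain ⟨A₁, A₂, h₂, hs'⟩ := ht.inversion
    cases hB with
    | list hB' =>
      obtain ⟨-, e₂⟩ := Ty.shape_sum_inj ((TyEq.fold _).shape_eq.trans (hs.trans hs'.symm))
      rcases ih h₂ ⟨_, .prod hB' (.list hB'), e₂⟩ with f | ⟨_, _, _, s⟩
      · obtain ⟨_, _, rfl, -⟩ := hv'.eq_pair_of_shape_prod h₂ (by simp [← e₂, Ty.shape])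
        cases f with
        | pair f₁ f₂ => exact .inl (.cons f₁ f₂)
      · exact .inr ⟨_, _, _, .inrC s⟩
    | bit | prod => simpa [Ty.shape] using congrFun (hs.trans hs'.symm) []
  | lam | skip | notOp | andOp | xorOp | split =>
    obtain ⟨B, hB, hs⟩ := hA
    simpa [Tm.valueHead] using MValue.valueHead_of_firstOrder (by constructor) ht hB hs

theorem reducible_notOp_var {j : ℕ} (hj : j < L.length) :
    AMReducible I C L (.app .notOp (.var j)) := by
  obtain ⟨w, hw⟩ := exists_freshWire I C L
  have h := AMStep.notRed (I := I) 0 C L j w hj hw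
  rw [Nat.zero_add] at h
  exact ⟨_, _, _, h⟩

theorem reducible_binOp_var_var {op : Tm} (hop : op = .andOp ∨ op = .xorOp) {j k : ℕ}
    (hj : j < L.length) (hk : k < L.length) :
    AMReducible I C L (.app op (.pair (.var j) (.var k))) := by
  obtain ⟨w, hw⟩ := exists_freshWire I C L
  rcases hop with rfl | rfl
  · have h := AMStep.andRed (I := I) 0 C L j k w hj hk hw
    rw [Nat.zero_add, Nat.zero_add] at h
    exact ⟨_, _, _, h⟩
  · have h := AMStep.xorRed (I := I) 0 C L j k w hj hk hw
    rw [Nat.zero_add, Nat.zero_add] at h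
    exact ⟨_, _, _, h⟩

theorem reducible_ite_var {j : ℕ} {V W : Tm} (hj : j < L.length) (hV : FOExt 0 L V)
    (hW : FOExt 0 L W) : AMReducible I C L (.ite (.var j) V W) := by
  by_cases hshape : ∃ U n ps, IteAux 0 L L.length V W U n ps
  · obtain ⟨U, n, ps, hU⟩ := hshape
    obtain ⟨ws, hlen, hnd, hfr⟩ := exists_freshWires I C L ps.length
    have h := AMStep.iteRed 0 C L j V W U n ps ws hj hU hlen hnd hfr
    rw [Nat.zero_add] at h
    exact ⟨_, _, _, h⟩
  · have h := AMStep.iteErr (I := I) 0 C L j V W hj hV hW hshape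
    rw [Nat.zero_add] at h
    exact ⟨_, _, _, h⟩

section

variable {M N : Tm} {B : Ty} (hN : HasType (List.replicate L.length .bit) N A)
include hN

theorem AMProgress.app_notOp (hA : A.shape [] = .bit) (ihN : AMProgress I C L N) :
    AMProgress I C L (.app .notOp N) :=
  ihN.bind .appR (fun s => ⟨_, _, _, .appR _ s⟩) fun vN => .inr <| .inr <| by
    rcases vN.linkedVar_or_reducible hN hA with ⟨j, hj, rfl⟩ | ⟨_, _, _, s⟩
    exacts [reducible_notOp_var hj, ⟨_, _, _, .appR _ s⟩]

theorem MValue.reducible_app_binOp {op : Tm} (hop : op = .andOp ∨ op = .xorOp) (hv : MValue N)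
    (hA : (Ty.prod .bit .bit).shape = A.shape) : AMReducible I C L (.app op N) := by
  obtain ⟨N₁, N₂, rfl, hv₁, hv₂⟩ :=
    hv.eq_pair_of_shape_prod hN (by simp [← hA, Ty.shape])
  obtain ⟨A₁, A₂, h₁, h₂, hs⟩ := hN.inversion
  obtain ⟨e₁, e₂⟩ := Ty.shape_prod_inj (hs.trans hA.symm)
  rcases hv₁.linkedVar_or_reducible h₁ (by simp [e₁, Ty.shape]) with
    ⟨j, hj, rfl⟩ | ⟨_, _, _, s₁⟩
  · rcases hv₂.linkedVar_or_reducible h₂ (by simp [e₂, Ty.shape]) with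
      ⟨k, hk, rfl⟩ | ⟨_, _, _, s₂⟩
    exacts [reducible_binOp_var_var hop hj hk, ⟨_, _, _, .appR _ (.pairR _ s₂)⟩]
  · exact ⟨_, _, _, .appR _ (.pairL _ s₁)⟩

theorem MValue.progress_app (hv : MValue M)
    (hM : HasType (List.replicate L.length .bit) M (.arrow A B)) (ihN : AMProgress I C L N) :
    AMProgress I C L (.app M N) := by
  rcases hv.eq_of_shape_arrow hM (by simp [Ty.shape]) with ⟨M, rfl⟩ | rfl | rfl | hop
  · exact .inr (.inr ⟨_, _, _, .beta 0 M N C L⟩)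
  · exact .inr (.inr ⟨_, _, _, .splitRed 0 N C L⟩)
  · obtain ⟨hA, -⟩ := Ty.shape_arrow_inj hM.inversion
    exact ihN.app_notOp hN (by simp [← hA, Ty.shape])
  · have hA : (Ty.prod .bit .bit).shape = A.shape := by
      rcases hop with rfl | rfl <;> exact (Ty.shape_arrow_inj hM.inversion).1
    exact ihN.bind .appR (fun s => ⟨_, _, _, .appR _ s⟩) fun vN =>
      .inr (.inr (vN.reducible_app_binOp hN hop hA))

end

theorem AMProgress.ite {P W : Tm} (hP : HasType (List.replicate L.length .bit) P .bit)
    (hV : HasType (List.replicate L.length .bit) V A)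
    (hW : HasType (List.replicate L.length .bit) W A) (hA : FirstOrder A)
    (ihP : AMProgress I C L P) (ihV : AMProgress I C L V) (ihW : AMProgress I C L W) :
    AMProgress I C L (.ite P V W) :=
  ihP.bind .ite1 (fun s => ⟨_, _, _, .ite1 _ _ s⟩) fun vP =>
  ihV.bind .ite2 (fun s => ⟨_, _, _, .ite2 _ _ s⟩) fun vV =>
  ihW.bind .ite3 (fun s => ⟨_, _, _, .ite3 _ _ s⟩) fun vW => .inr <| .inr <| by
    rcases vP.linkedVar_or_reducible hP (by simp [Ty.shape]) with
      ⟨j, hj, rfl⟩ | ⟨_, _, _, s⟩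
    · rcases vV.foExt_or_reducible hV ⟨A, hA, rfl⟩ with fV | ⟨_, _, _, s⟩
      · rcases vW.foExt_or_reducible hW ⟨A, hA, rfl⟩ with fW | ⟨_, _, _, s⟩
        exacts [reducible_ite_var hj fV fW, ⟨_, _, _, .ite3 _ _ s⟩]
      · exact ⟨_, _, _, .ite2 _ _ s⟩
    · exact ⟨_, _, _, .ite1 _ _ s⟩

theorem HasType.amProgress {M : Tm} (ht : HasType (List.replicate L.length .bit) M A) :
    AMProgress I C L M := by
  generalize hΔ : List.replicate L.length Ty.bit = Δ at ht
  induction ht with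
  | var _ | lam _ | skip | tt | ff | notOp | andOp | xorOp | split => exact .inl (by constructor)
  | err => exact .inr (.inl .err)
  | fix _ => exact .inr (.inr ⟨_, _, _, .fixRed 0 _ C L⟩)
  | conv _ _ ih => exact ih hΔ
  | app hM hN ihM ihN =>
    subst hΔ
    exact (ihM rfl).bind .appL (fun s => ⟨_, _, _, .appL _ s⟩) fun vM =>
      vM.progress_app hN hM (ihN rfl)
  | ite hP hV hW hA ihP ihV ihW =>
    subst hΔ
    exact .ite hP hV hW hA (ihP rfl) (ihV rfl) (ihW rfl)
  | pair _ _ ih₁ ih₂ =>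
    exact (ih₁ hΔ).bind .pairL (fun s => ⟨_, _, _, .pairL _ s⟩) fun v₁ =>
      (ih₂ hΔ).bind .pairR (fun s => ⟨_, _, _, .pairR _ s⟩) fun v₂ =>
        .inl (.pair v₁ v₂)
  | inl _ ih => exact (ih hΔ).bind .inl (fun s => ⟨_, _, _, .inlC s⟩) (.inl ∘ .inl)
  | inr _ ih => exact (ih hΔ).bind .inr (fun s => ⟨_, _, _, .inrC s⟩) (.inl ∘ .inr)
  | fst h ih =>
    subst hΔ
    refine (ih rfl).bind .fst (fun s => ⟨_, _, _, .fstC s⟩) fun v => ?_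
    obtain ⟨_, _, rfl, -⟩ := v.eq_pair_of_shape_prod h (by simp [Ty.shape])
    exact .inr (.inr ⟨_, _, _, .fstPair 0 _ _ C L⟩)
  | snd h ih =>
    subst hΔ
    refine (ih rfl).bind .snd (fun s => ⟨_, _, _, .sndC s⟩) fun v => ?_
    obtain ⟨_, _, rfl, -⟩ := v.eq_pair_of_shape_prod h (by simp [Ty.shape])
    exact .inr (.inr ⟨_, _, _, .sndPair 0 _ _ C L⟩)
  | letUnit h _ ih =>
    subst hΔ
    refine (ih rfl).bind .letL (fun s => ⟨_, _, _, .letL _ s⟩) fun v => ?_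
    obtain rfl := v.eq_skip_of_shape_unit h (by simp [Ty.shape])
    exact .inr (.inr ⟨_, _, _, .letU 0 _ C L⟩)
  | matchSum h _ _ ih =>
    subst hΔ
    refine (ih rfl).bind .match1 (fun s => ⟨_, _, _, .match1 _ _ s⟩) fun v => ?_
    rcases v.eq_inl_or_inr_of_shape_sum h (by simp [Ty.shape]) with ⟨_, rfl⟩ | ⟨_, rfl⟩
    exacts [.inr (.inr ⟨_, _, _, .matchInl 0 _ _ _ C L⟩),
      .inr (.inr ⟨_, _, _, .matchInr 0 _ _ _ C L⟩)]

end Progress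

theorem am_progress_general (I : Finset ℕ) (M : Tm) (C : List Gate) (L : List ℕ)
    (m : ℕ)
    (ht : HasType (List.replicate L.length Ty.bit) M (bitPow m)) :
    MValue M ∨ ContainsErr M ∨ ∃ N C' L', AMStep I 0 M C L N C' L' :=
  ht.amProgress

/-- progress for the circuit-generating abstract machine. -/
theorem am_progress (I : Finset ℕ) (M : Tm) (C : List Gate) (L : List ℕ)
    (m : ℕ) (hL : L.Nodup)
    (ht : HasType (List.replicate L.length Ty.bit) M (bitPow m)) :
    MValue M ∨ ContainsErr M ∨ ∃ N C' L', AMStep I 0 M C L N C' L' :=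
  am_progress_general I M C L m ht
end

section
/- One-step simulation invariant: if x₁:bit,...,xₙ:bit ⊢ M : bit^m and (M,(I,C),L) →_am (N,(I,C'),L'), then for every valuation u⃗ on I, either T(M,(I,C),L)(u⃗) equals T(N,(I,C'),L')(u⃗) (when the step eliminates a boolean constant tt or ff), or T(M,(I,C),L)(u⃗) reduces in one small-step to T(N,(I,C'),L')(u⃗), or N contains Err. -/
set_option autoImplicit true
set_option maxHeartbeats 1000000


/-- The valuation on which a machine circuit with input wires `I` is
executed: the input `u` on `I`, false elsewhere. -/
def initVal (I : Finset ℕ) (u : ℕ → Bool) : ℕ → Bool :=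
  fun w => if w ∈ I then u w else false

/-- Substitute, at depth `d`, each linked variable (de Bruijn index
`d + j`) by the boolean constant `vals[j]`. -/
def substAll (vals : List Bool) : ℕ → Tm → Tm
  | d, .var n => if n < d then .var n
                 else if n - d < vals.length then ofBool (vals.getD (n - d) false)
                 else .var n
  | d, .lam M => .lam (substAll vals (d+1) M)
  | d, .app M N => .app (substAll vals d M) (substAll vals d N)
  | d, .pair M N => .pair (substAll vals d M) (substAll vals d N)
  | d, .fst M => .fst (substAll vals d M)
  | d, .snd M => .snd (substAll vals d M)
  | d, .letUnit M N => .letUnit (substAll vals d M) (substAll vals d N)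
  | d, .ite P M N => .ite (substAll vals d P) (substAll vals d M) (substAll vals d N)
  | d, .inl M => .inl (substAll vals d M)
  | d, .inr M => .inr (substAll vals d M)
  | d, .matchSum P M N =>
      .matchSum (substAll vals d P) (substAll vals (d+1) M) (substAll vals (d+1) N)
  | d, .fix M => .fix (substAll vals d M)
  | _, t => t

/-- `T(M, (I,C), L)(u)` : the term `M` where each linked variable `x` is
replaced by the boolean obtained at wire `L(x)` by executing the circuit
`(I, C, Range L)` on the input `u`. -/
def Tfun (M : Tm) (C : List Gate) (L : List ℕ) (v : ℕ → Bool) : Tm :=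
  substAll (L.map fun w => runCircuit C v w) 0 M


/-! A machine step only appends fresh wires to the linking function and prepends gates whose
active wires are fresh, so the circuit's values on the old linked variables are unchanged: the
new list of values extends the old one, and well-scoped subterms untouched by the step are
translated identically. The generic rules commute with substituting booleans for the linked
variables, and each gate-generating rule makes its new wire carry the boolean that the
corresponding PCF reduction produces; for if-then-else, the two gates per fresh wire,
controlled by the condition wire with opposite polarities, copy the wire of the selected
branch. -/

theorem runCircuit_cons (g : Gate) (C : List Gate) (v : ℕ → Bool) :
    runCircuit (g :: C) v = execGate g (runCircuit C v) :=
  rfl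

theorem runCircuit_append (C₁ C₂ : List Gate) (v : ℕ → Bool) :
    runCircuit (C₁ ++ C₂) v = runCircuit C₁ (runCircuit C₂ v) :=
  List.foldr_append

theorem execGate_of_ne_active {g : Gate} {v : ℕ → Bool} {w : ℕ} (h : w ≠ g.active) :
    execGate g v w = v w :=
  if_neg h

theorem execGate_two_controls (w c₁ c₂ : ℕ) (b₁ b₂ : Bool) (v : ℕ → Bool) :
    execGate ⟨w, [(c₁, b₁), (c₂, b₂)]⟩ v w
      = (v w ^^ (ctrlVal v (c₁, b₁) && ctrlVal v (c₂, b₂))) := by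
  simp [execGate]

theorem runCircuit_of_forall_active_ne {C : List Gate} {w : ℕ}
    (h : ∀ g ∈ C, g.active ≠ w) (v : ℕ → Bool) : runCircuit C v w = v w := by
  induction C with
  | nil => rfl
  | cons g C ih =>
    simp only [List.mem_cons, forall_eq_or_imp] at h
    exact (execGate_of_ne_active (Ne.symm h.1)).trans (ih h.2)

theorem FreshWire.runCircuit_eq_false {I : Finset ℕ} {C : List Gate} {L : List ℕ} {w : ℕ}
    {v : ℕ → Bool} (hv : ∀ w ∉ I, v w = false) (hw : FreshWire I C L w) :
    runCircuit C v w = false := by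
  rw [runCircuit_of_forall_active_ne, hv w hw.1]
  rintro g hg rfl
  exact hw.2.1 ⟨g, hg, Set.mem_insert _ _⟩

theorem active_mem_of_mem_iteGates {pw : ℕ} {ws : List ℕ} {ps : List (ℕ × ℕ)} {g : Gate}
    (hg : g ∈ iteGates pw ws ps) : g.active ∈ ws := by
  induction ws, ps using iteGates.induct with
  | case1 u us a b ps ih =>
    simp only [iteGates, List.mem_cons] at hg
    rcases hg with rfl | rfl | hg
    · exact List.mem_cons_self
    · exact List.mem_cons_self
    · exact List.mem_cons_of_mem _ (ih hg)
  | case2 => simp [iteGates] at hg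

theorem map_runCircuit_iteGates {pw : ℕ} {ws : List ℕ} {ps : List (ℕ × ℕ)}
    {v : ℕ → Bool} (hlen : ws.length = ps.length) (hnd : ws.Nodup) (hws : ∀ w ∈ ws, v w = false)
    (hpw : pw ∉ ws) (hps : ∀ p ∈ ps, p.1 ∉ ws ∧ p.2 ∉ ws) :
    ws.map (runCircuit (iteGates pw ws ps).reverse v)
      = ps.map (fun p => if v pw then v p.1 else v p.2) := by
  induction ws generalizing ps v with
  | nil => simp [List.length_eq_zero_iff.mp hlen.symm]
  | cons u us ih =>
    obtain _ | ⟨⟨a, b⟩, ps⟩ := ps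
    · simp at hlen
    simp only [List.mem_cons, forall_eq_or_imp, not_or] at hws hpw hps
    obtain ⟨hu, hus⟩ := List.nodup_cons.mp hnd
    set g₁ : Gate := ⟨u, [(pw, true), (a, true)]⟩
    set v' := execGate ⟨u, [(pw, false), (b, true)]⟩ (execGate g₁ v)
    have hv' : ∀ x ≠ u, v' x = v x := fun x hx =>
      (execGate_of_ne_active hx).trans (execGate_of_ne_active hx)
    have hv'u : v' u = if v pw then v a else v b := by
      have hpw₁ : execGate g₁ v pw = v pw := execGate_of_ne_active hpw.1
      have hb₁ : execGate g₁ v b = v b := execGate_of_ne_active hps.1.2.1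
      simp only [v', execGate_two_controls, ctrlVal, hpw₁, hb₁, g₁, hws.1]
      cases v pw <;> simp
    have hrun : runCircuit (iteGates pw (u :: us) ((a, b) :: ps)).reverse v
        = runCircuit (iteGates pw us ps).reverse v' := by
      rw [iteGates, List.reverse_cons, List.reverse_cons, List.append_assoc, runCircuit_append]
      rfl
    have hu_run : runCircuit (iteGates pw us ps).reverse v' u = v' u :=
      runCircuit_of_forall_active_ne (w := u)
        (fun g hg h => hu (h ▸ active_mem_of_mem_iteGates (List.mem_reverse.mp hg))) v'
    have htail := ih (v := v') (by simpa using hlen) hus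
      (fun w hw => (hv' w (ne_of_mem_of_not_mem hw hu)).trans (hws.2 w hw)) hpw.2
      (fun p hp => ⟨(hps.2 p hp).1.2, (hps.2 p hp).2.2⟩)
    rw [hrun, List.map_cons, List.map_cons, htail, hu_run, hv'u, hv' pw hpw.1]
    congr 1
    refine List.map_congr_left fun p hp => ?_
    rw [hv' _ (hps.2 p hp).1.1, hv' _ (hps.2 p hp).2.1]

def FreeVarsLt : ℕ → Tm → Prop
  | k, .var n => n < k
  | k, .lam M => FreeVarsLt (k + 1) M
  | k, .app M N => FreeVarsLt k M ∧ FreeVarsLt k N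
  | k, .pair M N => FreeVarsLt k M ∧ FreeVarsLt k N
  | k, .fst M => FreeVarsLt k M
  | k, .snd M => FreeVarsLt k M
  | k, .letUnit M N => FreeVarsLt k M ∧ FreeVarsLt k N
  | k, .ite P M N => FreeVarsLt k P ∧ FreeVarsLt k M ∧ FreeVarsLt k N
  | k, .inl M => FreeVarsLt k M
  | k, .inr M => FreeVarsLt k M
  | k, .matchSum P M N => FreeVarsLt k P ∧ FreeVarsLt (k + 1) M ∧ FreeVarsLt (k + 1) N
  | k, .fix M => FreeVarsLt k M
  | _, _ => True

theorem HasType.freeVarsLt {Δ : List Ty} {M : Tm} {A : Ty} (h : HasType Δ M A) :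
    FreeVarsLt Δ.length M := by
  induction h with
  | var h => exact (List.getElem?_eq_some_iff.mp h).1
  | _ => simp_all [FreeVarsLt]

theorem substAll_append_of_freeVarsLt (vals extra : List Bool) {M : Tm} {d : ℕ}
    (hM : FreeVarsLt (vals.length + d) M) :
    substAll (vals ++ extra) d M = substAll vals d M := by
  induction M generalizing d with
  | var n =>
    simp only [FreeVarsLt] at hM
    by_cases hn : n < d
    · simp [substAll, hn]
    · have : n - d < vals.length := by omega
      simp only [substAll, hn, if_false, List.length_append, if_pos this,
        if_pos (show n - d < vals.length + extra.length by omega), List.getD_append _ _ _ _ this]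
  | lam M ih => exact congrArg Tm.lam (ih hM)
  | matchSum P M N ihP ihM ihN =>
    simp only [substAll, ihP hM.1, ihM (d := d + 1) hM.2.1, ihN (d := d + 1) hM.2.2]
  | _ => simp_all [FreeVarsLt, substAll]

theorem substAll_var_add_of_getElem?_eq_some {vals : List Bool} {d j : ℕ} {b : Bool}
    (h : vals[j]? = some b) :
    substAll vals d (.var (d + j)) = ofBool b := by
  obtain ⟨hj, rfl⟩ := List.getElem?_eq_some_iff.mp h
  simp [substAll, hj]

theorem substAll_map_var (f : ℕ → Bool) {L : List ℕ} {d j : ℕ} (hj : j < L.length) :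
    substAll (L.map f) d (.var (d + j)) = ofBool (f (L.getD j 0)) :=
  substAll_var_add_of_getElem?_eq_some (by simp [hj])

theorem substAll_map_append_singleton_var (f : ℕ → Bool) (L : List ℕ) (w d : ℕ) :
    substAll ((L ++ [w]).map f) d (.var (d + L.length)) = ofBool (f w) := by
  simpa using substAll_map_var f (L := L ++ [w]) (j := L.length) (by simp)

theorem liftTm_ofBool (k c : ℕ) (b : Bool) : liftTm k c (ofBool b) = ofBool b := by
  cases b <;> rfl

theorem subst_ofBool (N : Tm) (j : ℕ) (b : Bool) : subst N j (ofBool b) = ofBool b := by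
  cases b <;> rfl

theorem substAll_liftTm (vals : List Bool) (k : ℕ) {M : Tm} {c d : ℕ} (hc : c ≤ d) :
    substAll vals (d + k) (liftTm k c M) = liftTm k c (substAll vals d M) := by
  induction M generalizing c d with
  | var n =>
    by_cases h1 : n < c
    · simp [liftTm, substAll, h1, show n < d by omega, show n < d + k by omega]
    by_cases h2 : n < d
    · simp [liftTm, substAll, h1, h2]
    have e : n + k - (d + k) = n - d := by omega
    by_cases h3 : n - d < vals.length
    · simp [liftTm, substAll, h1, h2, e, h3, liftTm_ofBool]
    · simp [liftTm, substAll, h1, h2, e, h3]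
  | lam M ih =>
    simp only [liftTm, substAll]
    rw [Nat.add_right_comm, ih (by omega)]
  | matchSum P M N ihP ihM ihN =>
    simp only [liftTm, substAll]
    rw [Nat.add_right_comm, ihP hc, ihM (by omega), ihN (by omega)]
  | _ => simp_all [liftTm, substAll]

theorem substAll_subst (vals : List Bool) (N : Tm) {M : Tm} {j d : ℕ} :
    substAll vals (d + j) (subst N j M)
      = subst (substAll vals d N) j (substAll vals (d + j + 1) M) := by
  induction M generalizing j with
  | var n =>
    rcases lt_trichotomy n j with h | rfl | h
    · simp [subst, substAll, h.ne, h.not_gt, show n < d + j by omega,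
        show n < d + j + 1 by omega]
    · simp [subst, substAll, substAll_liftTm vals n (M := N) (Nat.zero_le d)]
    by_cases h1 : n < d + j + 1
    · simp [subst, substAll, h.ne', h, h1, show n - 1 < d + j by omega]
    have e : n - 1 - (d + j) = n - (d + j + 1) := by omega
    by_cases h2 : n - (d + j + 1) < vals.length
    · simp [subst, substAll, h.ne', h, h1, e, h2, subst_ofBool, show ¬ n - 1 < d + j by omega]
    · simp [subst, substAll, h.ne', h, h1, e, h2, show ¬ n - 1 < d + j by omega]
  | lam M ih => exact congrArg Tm.lam (ih (j := j + 1))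
  | matchSum P M Q ihP ihM ihQ =>
    simp only [subst, substAll, ihP]
    exact congrArg₂ _ (ihM (j := j + 1)) (ihQ (j := j + 1))
  | _ => simp_all [subst, substAll]

theorem substAll_subst_zero (vals : List Bool) (N M : Tm) (d : ℕ) :
    substAll vals d (subst N 0 M) = subst (substAll vals d N) 0 (substAll vals (d + 1) M) :=
  substAll_subst vals N (j := 0)


namespace IteAux

variable {d : ℕ} {L : List ℕ} {n n' : ℕ} {V W U : Tm} {ps : List (ℕ × ℕ)}

theorem fst_mem_and_snd_mem (h : IteAux d L n V W U n' ps) :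
    ∀ p ∈ ps, p.1 ∈ L ∧ p.2 ∈ L := by
  induction h with
  | var hj hk => simp [List.getElem?_eq_getElem hj, List.getElem?_eq_getElem hk]
  | nil => simp
  | pair _ _ ih₁ ih₂ | cons _ _ ih₁ ih₂ =>
    intro p hp
    exact (List.mem_append.mp hp).elim (ih₁ p) (ih₂ p)

theorem substAll_eq (f : ℕ → Bool) (b : Bool) {vals : List Bool}
    (h : IteAux d L n V W U n' ps)
    (hvals : ps.map (fun p => if b then f p.1 else f p.2) <+: vals.drop n) :
    substAll vals d U = substAll (L.map f) d (if b then V else W) := by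
  induction h with
  | @var m j k hj hk =>
    obtain ⟨t, ht⟩ := hvals
    have : vals[m]? = some (if b then f (L.getD j 0) else f (L.getD k 0)) := by
      rw [← Nat.add_zero m, ← List.getElem?_drop, ← ht]
      rfl
    rw [substAll_var_add_of_getElem?_eq_some this]
    cases b <;> simp [substAll_map_var f hj, substAll_map_var f hk]
  | nil => cases b <;> rfl
  | @pair _ _ _ _ _ p₁ _ _ _ _ _ h₁ _ ih₁ ih₂
  | @cons _ _ _ _ _ p₁ _ _ _ _ _ h₁ _ ih₁ ih₂ =>
    rw [List.map_append] at hvals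
    have e₁ := ih₁ ((List.prefix_append _ _).trans hvals)
    have e₂ := ih₂ (by simpa [h₁.length_eq, List.drop_drop] using hvals.drop p₁.length)
    cases b <;> simp_all [substAll]

end IteAux

theorem Step.ite_ofBool (b : Bool) (M N : Tm) :
    Step (.ite (ofBool b) M N) (if b then M else N) := by
  cases b
  exacts [.iteFf M N, .iteTt M N]

def SimStep (N a b : Tm) : Prop := a = b ∨ Step a b ∨ ContainsErr N

theorem SimStep.map {f g : Tm → Tm} (hf : ∀ {a b}, Step a b → Step (f a) (f b))
    (hg : ∀ {N}, ContainsErr N → ContainsErr (g N)) {N a b : Tm} (h : SimStep N a b) :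
    SimStep (g N) (f a) (f b) :=
  h.imp (congrArg f) (Or.imp hf hg)

namespace AMStep

variable {I : Finset ℕ} {v : ℕ → Bool}

theorem exists_append {d : ℕ} {M N : Tm} {C C' : List Gate} {L L' : List ℕ}
    (h : AMStep I d M C L N C' L') :
    ∃ E D, L' = L ++ E ∧ C' = D ++ C ∧ ∀ g ∈ D, g.active ∉ L := by
  induction h with
  | ttRed _ _ _ _ hw | notRed _ _ _ _ _ _ hw | andRed _ _ _ _ _ _ _ _ hw =>
    exact ⟨_, [_], rfl, rfl, by simpa using hw.2.2⟩
  | ffRed _ _ _ _ hw => exact ⟨_, [], rfl, rfl, by simp⟩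
  | xorRed _ _ _ _ _ _ _ _ hw => exact ⟨_, [_, _], rfl, rfl, by simpa using hw.2.2⟩
  | iteRed _ _ _ _ _ _ _ _ _ ws _ _ _ _ hfr =>
    exact ⟨ws, _, rfl, rfl, fun g hg =>
      (hfr _ (active_mem_of_mem_iteGates (List.mem_reverse.mp hg))).2.2⟩
  | _ => first | assumption | exact ⟨[], [], by simp, rfl, by simp⟩

theorem substAll_frame {d : ℕ} {M N : Tm} {C C' : List Gate} {L L' : List ℕ}
    (h : AMStep I d M C L N C' L') (v : ℕ → Bool) {P : Tm} {e : ℕ}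
    (hP : FreeVarsLt (L.length + e) P) :
    substAll (L'.map (runCircuit C' v)) e P = substAll (L.map (runCircuit C v)) e P := by
  obtain ⟨E, D, rfl, rfl, hD⟩ := h.exists_append
  have hL : L.map (runCircuit (D ++ C) v) = L.map (runCircuit C v) :=
    List.map_congr_left fun w hw => by
      rw [runCircuit_append, runCircuit_of_forall_active_ne (fun g hg he => hD g hg (he ▸ hw))]
  rw [List.map_append, hL]
  exact substAll_append_of_freeVarsLt _ _ (by simpa using hP)

theorem step_substAll_iteRed (hv : ∀ w ∉ I, v w = false) {d : ℕ} {C : List Gate}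
    {L : List ℕ} {j : ℕ} {V W U : Tm} {n : ℕ} {ps : List (ℕ × ℕ)} {ws : List ℕ}
    (hj : j < L.length) (ha : IteAux d L L.length V W U n ps) (hlen : ws.length = ps.length)
    (hnd : ws.Nodup) (hfr : ∀ w ∈ ws, FreshWire I C L w) :
    Step (substAll (L.map (runCircuit C v)) d (.ite (.var (d + j)) V W))
      (substAll ((L ++ ws).map (runCircuit ((iteGates (L.getD j 0) ws ps).reverse ++ C) v))
        d U) := by
  set v₀ := runCircuit C v
  have hwsL : ∀ w ∈ ws, w ∉ L := fun w hw => (hfr w hw).2.2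
  have hpw : L.getD j 0 ∈ L := List.getD_eq_getElem _ _ hj ▸ List.getElem_mem hj
  have hgates := map_runCircuit_iteGates (pw := L.getD j 0) (v := v₀) hlen hnd
    (fun w hw => (hfr w hw).runCircuit_eq_false hv) (fun h => hwsL _ h hpw)
    (fun p hp => ⟨fun h => hwsL _ h (ha.fst_mem_and_snd_mem p hp).1,
      fun h => hwsL _ h (ha.fst_mem_and_snd_mem p hp).2⟩)
  rw [ha.substAll_eq v₀ (v₀ (L.getD j 0)) (by
      rw [List.map_append, List.drop_left' (List.length_map _), runCircuit_append, hgates]),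
    apply_ite (substAll _ d)]
  simpa [substAll, hj] using
    Step.ite_ofBool (v₀ (L.getD j 0)) (substAll (L.map v₀) d V) (substAll (L.map v₀) d W)

theorem simStep_substAll (hv : ∀ w ∉ I, v w = false) {d : ℕ} {M N : Tm} {C C' : List Gate}
    {L L' : List ℕ} (h : AMStep I d M C L N C' L') (hM : FreeVarsLt (L.length + d) M) :
    SimStep N (substAll (L.map (runCircuit C v)) d M)
      (substAll (L'.map (runCircuit C' v)) d N) := by
  induction h with
  | beta => exact .inr (.inl (substAll_subst_zero .. ▸ .beta _ _))
  | fstPair => exact .inr (.inl (.fstPair _ _))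
  | sndPair => exact .inr (.inl (.sndPair _ _))
  | letU => exact .inr (.inl (.letU _))
  | splitRed => exact .inr (.inl (.splitRed _))
  | matchInl => exact .inr (.inl (substAll_subst_zero .. ▸ .matchInl _ _ _))
  | matchInr => exact .inr (.inl (substAll_subst_zero .. ▸ .matchInr _ _ _))
  | fixRed => exact .inr (.inl (.fixRed _))
  | ffRed _ _ _ _ hw =>
    refine .inl ?_
    rw [substAll_map_append_singleton_var, hw.runCircuit_eq_false hv]
    rfl
  | ttRed _ _ _ _ hw =>
    refine .inl ?_
    rw [substAll_map_append_singleton_var, runCircuit_cons]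
    simp [execGate, hw.runCircuit_eq_false hv, substAll, ofBool]
  | notRed _ C L j _ hj hw =>
    refine .inr (.inl ?_)
    rw [substAll_map_append_singleton_var]
    simpa [substAll, hj, runCircuit_cons, execGate, ctrlVal, hw.runCircuit_eq_false hv]
      using Step.notRed (runCircuit C v (L.getD j 0))
  | andRed _ C L j k _ hj hk hw =>
    refine .inr (.inl ?_)
    rw [substAll_map_append_singleton_var]
    simpa [substAll, hj, hk, runCircuit_cons, execGate, ctrlVal, hw.runCircuit_eq_false hv]
      using Step.andRed (runCircuit C v (L.getD j 0)) (runCircuit C v (L.getD k 0))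
  | xorRed _ C L j k w hj hk hw =>
    have hjw : L[j] ≠ w := fun h => hw.2.2 (h ▸ List.getElem_mem hj)
    refine .inr (.inl ?_)
    rw [substAll_map_append_singleton_var]
    simpa [substAll, hj, hk, runCircuit_cons, execGate, ctrlVal, hw.runCircuit_eq_false hv, hjw,
      Bool.xor_comm]
      using Step.xorRed (runCircuit C v (L.getD j 0)) (runCircuit C v (L.getD k 0))
  | iteRed _ _ _ _ _ _ _ _ _ _ hj ha hlen hnd hfr =>
    exact .inr (.inl (step_substAll_iteRed hv hj ha hlen hnd hfr))
  | iteErr => exact .inr (.inr .err)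
  | lamC _ ih => exact (ih hM).map Step.lamC .lam
  | appL _ h ih =>
    simp only [substAll, h.substAll_frame v hM.2]
    exact (ih hM.1).map Step.appL .appL
  | appR _ h ih =>
    simp only [substAll, h.substAll_frame v hM.1]
    exact (ih hM.2).map Step.appR .appR
  | pairL _ h ih =>
    simp only [substAll, h.substAll_frame v hM.2]
    exact (ih hM.1).map Step.pairL .pairL
  | pairR _ h ih =>
    simp only [substAll, h.substAll_frame v hM.1]
    exact (ih hM.2).map Step.pairR .pairR
  | fstC _ ih => exact (ih hM).map Step.fstC .fst
  | sndC _ ih => exact (ih hM).map Step.sndC .snd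
  | letL _ h ih =>
    simp only [substAll, h.substAll_frame v hM.2]
    exact (ih hM.1).map Step.letL .letL
  | letR _ h ih =>
    simp only [substAll, h.substAll_frame v hM.1]
    exact (ih hM.2).map Step.letR .letR
  | ite1 _ _ h ih =>
    simp only [substAll, h.substAll_frame v hM.2.1, h.substAll_frame v hM.2.2]
    exact (ih hM.1).map Step.ite1 .ite1
  | ite2 _ _ h ih =>
    simp only [substAll, h.substAll_frame v hM.1, h.substAll_frame v hM.2.2]
    exact (ih hM.2.1).map Step.ite2 .ite2
  | ite3 _ _ h ih =>
    simp only [substAll, h.substAll_frame v hM.1, h.substAll_frame v hM.2.1]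
    exact (ih hM.2.2).map Step.ite3 .ite3
  | inlC _ ih => exact (ih hM).map Step.inlC .inl
  | inrC _ ih => exact (ih hM).map Step.inrC .inr
  | match1 _ _ h ih =>
    simp only [substAll, h.substAll_frame v (e := _ + 1) hM.2.1,
      h.substAll_frame v (e := _ + 1) hM.2.2]
    exact (ih hM.1).map Step.match1 .match1
  | match2 _ _ h ih =>
    simp only [substAll, h.substAll_frame v hM.1, h.substAll_frame v (e := _ + 1) hM.2.2]
    exact (ih hM.2.1).map Step.match2 .match2
  | match3 _ _ h ih =>
    simp only [substAll, h.substAll_frame v hM.1, h.substAll_frame v (e := _ + 1) hM.2.1]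
    exact (ih hM.2.2).map Step.match3 .match3
  | fixC _ ih => exact (ih hM).map Step.fixC .fix

end AMStep

theorem am_simulation_invariant_general (I : Finset ℕ) (M N : Tm)
    (C C' : List Gate) (L L' : List ℕ) (m : ℕ)
    (ht : HasType (List.replicate L.length Ty.bit) M (bitPow m))
    (hs : AMStep I 0 M C L N C' L') :
    ∀ u : ℕ → Bool,
      Tfun M C L (initVal I u) = Tfun N C' L' (initVal I u) ∨
      Step (Tfun M C L (initVal I u)) (Tfun N C' L' (initVal I u)) ∨
      ContainsErr N := by
  intro u
  have hM : FreeVarsLt (L.length + 0) M := by simpa using ht.freeVarsLt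
  exact hs.simStep_substAll (fun w hw => if_neg hw) hM

/-- one-step simulation invariant (Lemma on a single step of
the abstract machine): for every valuation `u⃗` on `I`, either
`T(M,(I,C),L)(u⃗) = T(N,(I,C'),L')(u⃗)` (as when the step eliminates a
boolean constant), or `T(M,(I,C),L)(u⃗)` reduces in one small-step to
`T(N,(I,C'),L')(u⃗)`, or `N` contains Err. -/
theorem am_simulation_invariant (I : Finset ℕ) (M N : Tm)
    (C C' : List Gate) (L L' : List ℕ) (m : ℕ) (hL : L.Nodup)
    (ht : HasType (List.replicate L.length Ty.bit) M (bitPow m))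
    (hs : AMStep I 0 M C L N C' L') :
    ∀ u : ℕ → Bool,
      Tfun M C L (initVal I u) = Tfun N C' L' (initVal I u) ∨
      Step (Tfun M C L (initVal I u)) (Tfun N C' L' (initVal I u)) ∨
      ContainsErr N :=
  am_simulation_invariant_general I M N C C' L L' m ht hs
end
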